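/- arXiv:math/0506530 — 15 statements merged into one kernel-verified Lean document; each statement's English description precedes it below -/
import Mathlib

section
/- Let R be a commutative integral domain and G a linearly ordered additive abelian group (a linear order compatible with addition). Then an element f of the group algebra AddMonoidAlgebra R G is a unit if and only if f = single g r for some g ∈ G and some unit r of R; that is, the units are exactly the monomials r·x^g with r invertible in R. -/
/-!
If `f * h` is a monomial and `G` has two unique sums, then `f` and `h` are monomials: otherwise
the supports of `f` and `h` admit two distinct pairs `(a, b)` each reaching `a + b` uniquely, and
over a ring without zero divisors both sums `a + b` lie in the support of `f * h`, a single point,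
contradicting uniqueness. A linearly ordered group has two unique sums (the sums of the maxima and
of the minima), so a unit and its inverse are monomials `single g a`, `single (-g) b` with
`a * b = b * a = 1`.
-/

open Finset

namespace AddMonoidAlgebra

variable {R G : Type*} [Semiring R] [NoZeroDivisors R]

theorem card_support_mul_card_support_le_one_of_mul_eq_single [Add G] [TwoUniqueSums G]
    {f h : R[G]} {c : G} {r : R} (hfh : f * h = single c r) :
    #f.coeff.support * #h.coeff.support ≤ 1 := by
  by_contra! hcard
  obtain ⟨p, hp, q, hq, hpq, hup, huq⟩ := TwoUniqueSums.uniqueAdd_of_one_lt_card hcard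
  have add_eq : ∀ s ∈ f.coeff.support ×ˢ h.coeff.support,
      UniqueAdd f.coeff.support h.coeff.support s.1 s.2 → s.1 + s.2 = c := by
    intro s hs hus
    rw [mem_product, Finsupp.mem_support_iff, Finsupp.mem_support_iff] at hs
    by_contra hne
    have hcoeff := coeff_mul_add_of_uniqueAdd hus
    rw [hfh, coeff_single, Finsupp.single_eq_of_ne hne] at hcoeff
    exact mul_ne_zero hs.1 hs.2 hcoeff.symm
  obtain ⟨hq₁, hq₂⟩ := hup (mem_product.1 hq).1 (mem_product.1 hq).2
    ((add_eq q hq huq).trans (add_eq p hp hup).symm)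
  exact hpq (Prod.ext hq₁ hq₂).symm

theorem exists_eq_single_of_mul_eq_single [Add G] [TwoUniqueSums G]
    {f h : R[G]} {c : G} {r : R} (hr : r ≠ 0) (hfh : f * h = single c r) :
    ∃ g a, f = single g a := by
  have hfh₀ : f * h ≠ 0 := by simpa [hfh] using hr
  have hf : f.coeff.support.Nonempty := by
    simpa [Finsupp.support_nonempty_iff, coeff_eq_zero] using left_ne_zero_of_mul hfh₀
  have hh : h.coeff.support.Nonempty := by
    simpa [Finsupp.support_nonempty_iff, coeff_eq_zero] using right_ne_zero_of_mul hfh₀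
  have hf₁ : #f.coeff.support = 1 :=
    le_antisymm (le_of_mul_le_of_one_le_left
      (card_support_mul_card_support_le_one_of_mul_eq_single hfh) hh.card_pos) hf.card_pos
  obtain ⟨g, a, -, hfa⟩ := Finsupp.card_support_eq_one'.1 hf₁
  exact ⟨g, a, coeff_injective hfa⟩

theorem isUnit_iff_exists_single [Nontrivial R] [AddGroup G] [TwoUniqueSums G] {f : R[G]} :
    IsUnit f ↔ ∃ g, ∃ r : Rˣ, f = single g (r : R) := by
  constructor
  · rintro ⟨u, rfl⟩
    obtain ⟨g, a, hu⟩ := exists_eq_single_of_mul_eq_single one_ne_zero (u.mul_inv.trans one_def)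
    obtain ⟨g', b, hv⟩ := exists_eq_single_of_mul_eq_single one_ne_zero (u.inv_mul.trans one_def)
    have hab := u.mul_inv
    have hba := u.inv_mul
    rw [hu, hv, single_mul_single, one_def, single_inj] at hab hba
    simp only [one_ne_zero, and_false, or_false] at hab hba
    exact ⟨g, ⟨a, b, hab.2, hba.2⟩, hu⟩
  · rintro ⟨g, r, rfl⟩
    exact ⟨⟨single g (r : R), single (-g) ↑r⁻¹, by simp [one_def], by simp [one_def]⟩, rfl⟩

end AddMonoidAlgebra

/-- If `R` is a commutative integral domain and `G` is a linearly
ordered additive abelian group, then the units of `AddMonoidAlgebra R G` are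
exactly the monomials `single g r` with `r` a unit of `R`. -/
theorem stmt_3 (R G : Type*) [CommRing R] [IsDomain R] [AddCommGroup G]
    [LinearOrder G] [CovariantClass G G (· + ·) (· < ·)]
    (f : AddMonoidAlgebra R G) :
    IsUnit f ↔ ∃ (g : G) (r : Rˣ), f = AddMonoidAlgebra.single g (r : R) :=
  AddMonoidAlgebra.isUnit_iff_exists_single
end

section
/- Let R be a commutative integral domain and G a linearly ordered additive abelian group. Suppose there exist a natural number n ≥ 2 and a nonzero element s ∈ G such that for every k ∈ ℕ there is t ∈ G with s = n^k • t (i.e., s lies in G_n = ⋂_k n^k G and s ≠ 0). Then the group algebra AddMonoidAlgebra R G is not a Noetherian ring. -/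
/-!
For a subgroup `H ≤ G`, let `Δ H` be the ideal of `R[G]` generated by the elements `x^h - 1`,
`h ∈ H`. It lies in the kernel of `R[G] → R[G/H]`, which detects `x^g - 1 ∈ Δ H ↔ g ∈ H`, so
`H ↦ Δ H` is an order embedding and a Noetherian `R[G]` satisfies the ascending chain condition
on subgroups of `G`. But `G` is torsion-free, being linearly ordered, so writing `s = n^k • t_k`
gives `t_k = n • t_(k+1)`, and the cyclic subgroups `⟨t_k⟩` form a strictly ascending chain.
-/

namespace AddMonoidAlgebra

variable (R : Type*) {G : Type*} [CommRing R] [AddCommGroup G]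

noncomputable def relativeAugmentationIdeal (H : AddSubgroup G) : Ideal (AddMonoidAlgebra R G) :=
  Ideal.span ((fun h => single h 1 - 1) '' H)

variable {R}

theorem relativeAugmentationIdeal_le_ker_mapDomainRingHom (H : AddSubgroup G) :
    relativeAugmentationIdeal R H ≤ RingHom.ker (mapDomainRingHom R (QuotientAddGroup.mk' H)) := by
  rw [relativeAugmentationIdeal, Ideal.span_le]
  rintro _ ⟨h, hh, rfl⟩
  rw [SetLike.mem_coe, RingHom.mem_ker, map_sub, map_one, mapDomainRingHom_apply, mapDomain_single,
    QuotientAddGroup.mk'_apply, (QuotientAddGroup.eq_zero_iff h).mpr hh, one_def, sub_self]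

theorem single_sub_one_mem_relativeAugmentationIdeal_iff [Nontrivial R] {H : AddSubgroup G}
    {g : G} : single g (1 : R) - 1 ∈ relativeAugmentationIdeal R H ↔ g ∈ H := by
  refine ⟨fun hg => ?_, fun hg => Ideal.subset_span ⟨g, hg, rfl⟩⟩
  have := relativeAugmentationIdeal_le_ker_mapDomainRingHom H hg
  rw [RingHom.mem_ker, map_sub, map_one, sub_eq_zero, mapDomainRingHom_apply, mapDomain_single,
    one_def, single_left_inj one_ne_zero] at this
  exact (QuotientAddGroup.eq_zero_iff g).mp this

theorem relativeAugmentationIdeal_le_iff [Nontrivial R] {H K : AddSubgroup G} :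
    relativeAugmentationIdeal R H ≤ relativeAugmentationIdeal R K ↔ H ≤ K :=
  ⟨fun hle _ hg => single_sub_one_mem_relativeAugmentationIdeal_iff.mp
      (hle (single_sub_one_mem_relativeAugmentationIdeal_iff.mpr hg)),
    fun hle => Ideal.span_mono (Set.image_mono hle)⟩

theorem wellFoundedGT_addSubgroup_of_isNoetherianRing [Nontrivial R]
    [IsNoetherianRing (AddMonoidAlgebra R G)] : WellFoundedGT (AddSubgroup G) :=
  (OrderEmbedding.ofMapLEIff (relativeAugmentationIdeal R) fun _ _ =>
    relativeAugmentationIdeal_le_iff).wellFoundedGT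

end AddMonoidAlgebra

section TorsionFree

variable {G : Type*} [AddCommGroup G] [IsAddTorsionFree G]

theorem AddSubgroup.zmultiples_nsmul_lt_zmultiples {a : G} (ha : a ≠ 0) {n : ℕ} (hn : n ≠ 1) :
    zmultiples (n • a) < zmultiples a := by
  refine lt_of_le_not_ge (zmultiples_le_of_mem (nsmul_mem (mem_zmultiples a) n)) fun hge => ?_
  obtain ⟨m, hm⟩ := mem_zmultiples_iff.mp (hge (mem_zmultiples a))
  have hmn : (m * n - 1 : ℤ) • a = 0 := by
    rw [sub_smul, one_smul, mul_smul, natCast_zsmul, hm, sub_self]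
  have : m * n = 1 := by
    simpa [sub_eq_zero, ha] using hmn
  exact hn (by exact_mod_cast Int.eq_one_of_mul_eq_one_left (Int.natCast_nonneg n) this)

theorem not_wellFoundedGT_addSubgroup_of_forall_eq_pow_nsmul {n : ℕ} (hn : n ≠ 1) {s : G}
    (hs : s ≠ 0) (hdiv : ∀ k : ℕ, ∃ t : G, s = n ^ k • t) : ¬ WellFoundedGT (AddSubgroup G) := by
  intro
  choose t ht using hdiv
  have hn₀ : n ≠ 0 := by
    rintro rfl
    exact hs (by simpa using ht 1)
  have ht_succ (k : ℕ) : t k = n • t (k + 1) :=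
    nsmul_right_injective (pow_ne_zero k hn₀) (by simp only [← ht, ← mul_nsmul', ← pow_succ])
  have ht_ne (k : ℕ) : t k ≠ 0 := by
    rintro h
    exact hs (by rw [ht k, h, smul_zero])
  refine not_strictMono_of_wellFoundedGT (fun k => AddSubgroup.zmultiples (t k))
    (strictMono_nat_of_lt_succ fun k => ?_)
  rw [ht_succ k]
  exact AddSubgroup.zmultiples_nsmul_lt_zmultiples (ht_ne (k + 1)) hn

end TorsionFree

theorem isAddTorsionFree_of_covariantClass_lt (G : Type*) [AddCommGroup G] [LinearOrder G]
    [CovariantClass G G (· + ·) (· < ·)] : IsAddTorsionFree G :=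
  haveI : CovariantClass G G (· + ·) (· ≤ ·) := covariantClass_le_of_lt G G (· + ·)
  haveI : IsOrderedAddMonoid G := { add_le_add_left := fun _ _ h c => add_le_add_left h c }
  inferInstance

/-- Let `R` be a commutative integral domain and `G` a linearly
ordered additive abelian group. If there are `n ≥ 2` and a nonzero `s ∈ G`
with `s ∈ ⋂_k n^k G` (i.e. for every `k` there is `t` with `s = n^k • t`),
then `AddMonoidAlgebra R G` is not a Noetherian ring. -/
theorem stmt_4 (R G : Type*) [CommRing R] [IsDomain R] [AddCommGroup G]
    [LinearOrder G] [CovariantClass G G (· + ·) (· < ·)]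
    (n : ℕ) (hn : 2 ≤ n) (s : G) (hs : s ≠ 0)
    (hdiv : ∀ k : ℕ, ∃ t : G, s = n ^ k • t) :
    ¬ IsNoetherianRing (AddMonoidAlgebra R G) := by
  intro
  have := isAddTorsionFree_of_covariantClass_lt G
  exact not_wellFoundedGT_addSubgroup_of_forall_eq_pow_nsmul (by omega) hs hdiv
    (AddMonoidAlgebra.wellFoundedGT_addSubgroup_of_isNoetherianRing (R := R))
end

section
/- Let R be a commutative integral domain. Then the group algebra AddMonoidAlgebra R ℚ fails the ascending chain condition on principal ideals (it is not a WfDvdMonoid); consequently it is neither a Noetherian ring nor a unique factorization domain. -/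
/-!
The elements `x ^ (1 / 2 ^ n) - 1` form a strictly descending divisibility chain: the step from
`n` to `n + 1` has cofactor `x ^ (1 / 2 ^ (n + 1)) + 1`, which has two monomials. Such an element
is not a unit, because `ℚ` has the two-unique-sums property: if `f` has at least two monomials
and `g ≠ 0`, two distinct exponents of `f * g` are reached in only one way, so `f * g` has at
least two monomials, while `1` has one.
-/

open Finset

namespace AddMonoidAlgebra

section TwoUniqueSums

variable {R A : Type*} [Semiring R] [NoZeroDivisors R] [Add A] [TwoUniqueSums A]

theorem card_support_coeff_le_one_of_mul {f g : R[A]} (hg : g ≠ 0)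
    (hfg : #(f * g).coeff.support ≤ 1) : #f.coeff.support ≤ 1 := by
  by_contra! hf
  have hg_pos : 0 < #g.coeff.support := by
    simpa [card_pos, Finsupp.support_nonempty_iff, ← coeff_eq_zero] using hg
  obtain ⟨p₁, hp₁, p₂, hp₂, hne, hu₁, hu₂⟩ :=
    TwoUniqueSums.uniqueAdd_of_one_lt_card (A := f.coeff.support) (B := g.coeff.support)
      (hf.trans_le (Nat.le_mul_of_pos_right _ hg_pos))
  rw [mem_product] at hp₁ hp₂
  have hmem : ∀ p : A × A, p.1 ∈ f.coeff.support → p.2 ∈ g.coeff.support →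
      UniqueAdd f.coeff.support g.coeff.support p.1 p.2 → p.1 + p.2 ∈ (f * g).coeff.support := by
    intro p h₁ h₂ hu
    rw [Finsupp.mem_support_iff, coeff_mul_add_of_uniqueAdd hu]
    exact mul_ne_zero (Finsupp.mem_support_iff.mp h₁) (Finsupp.mem_support_iff.mp h₂)
  have hsum : p₁.1 + p₁.2 ≠ p₂.1 + p₂.2 := fun h =>
    hne (Prod.ext (hu₁ hp₂.1 hp₂.2 h.symm).1.symm (hu₁ hp₂.1 hp₂.2 h.symm).2.symm)
  exact hsum (card_le_one.mp hfg _ (hmem p₁ hp₁.1 hp₁.2 hu₁) _ (hmem p₂ hp₂.1 hp₂.2 hu₂))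

end TwoUniqueSums

theorem card_support_coeff_le_one_of_isUnit {R A : Type*} [Semiring R] [Nontrivial R]
    [NoZeroDivisors R] [AddMonoid A] [TwoUniqueSums A] {f : R[A]} (hf : IsUnit f) :
    #f.coeff.support ≤ 1 := by
  obtain ⟨g, hfg⟩ := hf.exists_right_inv
  refine card_support_coeff_le_one_of_mul (g := g) (fun hg => ?_) ?_
  · simp [hg] at hfg
  · rw [hfg]
    exact (card_le_card support_coeff_one_subset).trans (by simp)

theorem single_sub_one_ne_zero {R A : Type*} [Ring R] [Nontrivial R] [AddZeroClass A] {b : A}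
    (hb : b ≠ 0) : (single b 1 - 1 : R[A]) ≠ 0 := by
  rw [sub_ne_zero, one_def]
  exact fun h => hb (single_left_injective one_ne_zero h)

section CommRing

variable {R A : Type*} [CommRing R] [Nontrivial R] [NoZeroDivisors R] [AddCommMonoid A]

theorem not_isUnit_single_one_add_one [TwoUniqueSums A] {b : A} (hb : b ≠ 0) :
    ¬ IsUnit (single b 1 + 1 : R[A]) := by
  classical
  intro hu
  have hb0 : b ∈ (single b 1 + 1 : R[A]).coeff.support := by
    simp [one_def, coeff_add, coeff_single, hb]
  have h00 : 0 ∈ (single b 1 + 1 : R[A]).coeff.support := by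
    simp [one_def, coeff_add, coeff_single, hb.symm]
  exact hb (card_le_one.mp (card_support_coeff_le_one_of_isUnit hu) _ hb0 _ h00)

theorem dvdNotUnit_single_sub_one [TwoUniqueSums A] {b : A} (hb : b ≠ 0) :
    DvdNotUnit (single b 1 - 1 : R[A]) (single (2 • b) 1 - 1) := by
  have hsq : single (2 • b) (1 : R) = single b 1 * single b 1 := by
    rw [single_mul_single, mul_one, two_nsmul]
  exact ⟨single_sub_one_ne_zero hb, single b 1 + 1, not_isUnit_single_one_add_one hb, by
    rw [hsq]; ring⟩

theorem not_wfDvdMonoid_of_halving [TwoUniqueSums A] (b : ℕ → A) (hb : ∀ n, b n ≠ 0)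
    (hhalf : ∀ n, 2 • b (n + 1) = b n) : ¬ WfDvdMonoid R[A] := by
  intro _
  obtain ⟨n, hn⟩ := WellFounded.not_rel_apply_succ (r := DvdNotUnit)
    fun n => (single (b n) 1 - 1 : R[A])
  exact hn (hhalf n ▸ dvdNotUnit_single_sub_one (hb (n + 1)))

end CommRing

end AddMonoidAlgebra

/-- For a commutative integral domain `R`, the group algebra
`AddMonoidAlgebra R ℚ` fails the ascending chain condition on principal
ideals (it is not a `WfDvdMonoid`); consequently it is neither Noetherian
nor a unique factorization domain. -/
theorem stmt_5 (R : Type*) [CommRing R] [IsDomain R] :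
    haveI : IsDomain (AddMonoidAlgebra R ℚ) :=
      NoZeroDivisors.to_isDomain (AddMonoidAlgebra R ℚ)
    ¬ WfDvdMonoid (AddMonoidAlgebra R ℚ) ∧
    ¬ IsNoetherianRing (AddMonoidAlgebra R ℚ) ∧
    ¬ UniqueFactorizationMonoid (AddMonoidAlgebra R ℚ) := by
  have hwf : ¬ WfDvdMonoid (AddMonoidAlgebra R ℚ) :=
    AddMonoidAlgebra.not_wfDvdMonoid_of_halving (fun n => (2 ^ n : ℚ)⁻¹) (fun n => by positivity)
      fun n => by rw [two_nsmul, pow_succ]; ring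
  exact ⟨hwf, fun _ => hwf inferInstance, fun _ => hwf inferInstance⟩
end

section
/- Let K be a field. The Krull dimension of the group algebra AddMonoidAlgebra K (Fin n → ℚ) (the posynomial ring Pos(K,ℚ)[x₁,…,xₙ] in n variables with rational exponents) equals n. -/
/-!
If `𝔭₀ < ⋯ < 𝔭ₗ` is a chain of primes in a `K`-algebra and `fᵢ ∈ 𝔭ᵢ₊₁ \ 𝔭ᵢ`, then no nonzero
polynomial in `f₀, …, fₗ₋₁` even lies in `𝔭₀`: peel off one variable at a time, dividing by the
first variable `f₀ ∉ 𝔭₀` and reading off constant terms modulo `𝔭₁ ∋ f₀`. Hence the Krull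
dimension of a `K`-algebra is at most its transcendence degree. The algebra `K[ℚⁿ]` is algebraic
over `K[x₁, …, xₙ]`, since `x^q` with `q = a / N` satisfies `X ^ N = x^a` and inverses of
algebraic units are algebraic; so its transcendence degree is at most `n`.

Conversely, killing the coordinates `j ≥ i` of the exponents gives ring endomorphisms of the
domain `K[ℚⁿ]` whose kernels form a strictly increasing chain of `n + 1` primes, the `i`-th step
being witnessed by `xᵢ - 1`.
-/

open Polynomial in
theorem Polynomial.comap_eval₂RingHom_eq_bot {S A : Type*} [CommRing S] [CommRing A]
    {ψ : S →+* A} {p q : Ideal A} [p.IsPrime] (hpq : p ≤ q) {x : A} (hxq : x ∈ q) (hxp : x ∉ p)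
    (hψ : q.comap ψ = ⊥) : p.comap (eval₂RingHom ψ x) = ⊥ := by
  have hψ' (s : S) (hs : ψ s ∈ q) : s = 0 := by
    simpa [hψ] using (show s ∈ q.comap ψ from hs)
  refine eq_bot_iff.mpr fun P => ?_
  simp only [Ideal.mem_comap, coe_eval₂RingHom, Ideal.mem_bot]
  induction P using Polynomial.recOnHorner with
  | M0 => exact fun _ => rfl
  | MC P a hP₀ ha _ =>
    intro h
    obtain ⟨r, rfl⟩ := X_dvd_iff.mpr hP₀
    refine absurd (hψ' a ?_) ha
    simpa using q.sub_mem (hpq h) (q.mul_mem_right (eval₂ ψ x r) hxq)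
  | MX P hP ih =>
    intro h
    rw [eval₂_mul_X] at h
    exact absurd (ih ((‹p.IsPrime›.mem_or_mem h).resolve_right hxp)) hP

namespace MvPolynomial

variable {R A : Type*} [CommRing R] [CommRing A] [Algebra R A]

theorem aeval_eq_eval₂_finSuccEquiv {l : ℕ} (f : Fin (l + 1) → A)
    (Q : MvPolynomial (Fin (l + 1)) R) :
    aeval f Q = (finSuccEquiv R l Q).eval₂ (aeval (Fin.tail f)).toRingHom (f 0) := by
  suffices (aeval f).toRingHom = (Polynomial.eval₂RingHom (aeval (Fin.tail f)).toRingHom (f 0)).comp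
      (finSuccEquiv R l).toRingHom from congrArg (· Q) (congrArg DFunLike.coe this)
  refine ringHom_ext (fun r => ?_) (Fin.cases ?_ fun j => ?_)
  · simp [finSuccEquiv_apply]
  · simp [finSuccEquiv_X_zero]
  · simp [finSuccEquiv_X_succ, Fin.tail]

theorem comap_aeval_eq_bot_of_chain {l : ℕ} (q : Fin (l + 1) → Ideal A)
    (hq_prime : ∀ i, (q i).IsPrime) (hq : Monotone q)
    (hR : (q (Fin.last l)).comap (algebraMap R A) = ⊥) (f : Fin l → A)
    (hf : ∀ i, f i ∈ q i.succ) (hf' : ∀ i, f i ∉ q i.castSucc) :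
    (q 0).comap (aeval (R := R) f) = ⊥ := by
  induction l with
  | zero =>
    refine eq_bot_iff.mpr fun Q hQ => ?_
    obtain ⟨r, rfl⟩ := C_surjective (Fin 0) Q
    have : r ∈ (q (Fin.last 0)).comap (algebraMap R A) := by simpa using hQ
    rw [hR, Ideal.mem_bot] at this
    simp [this]
  | succ l ih =>
    have hq₁ : (q 1).comap (aeval (R := R) (Fin.tail f)) = ⊥ :=
      ih (q ∘ Fin.succ) (fun i => hq_prime _) (hq.comp Fin.strictMono_succ.monotone)
        (by simpa using hR) (Fin.tail f) (fun i => hf i.succ) fun i => by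
          have := hf' i.succ
          rwa [← Fin.succ_castSucc] at this
    have : (q 0).IsPrime := hq_prime 0
    have h₀ := Polynomial.comap_eval₂RingHom_eq_bot (ψ := (aeval (R := R) (Fin.tail f)).toRingHom)
      (hq (Fin.zero_le 1)) (hf 0) (hf' 0) hq₁
    refine eq_bot_iff.mpr fun Q hQ => ?_
    have : finSuccEquiv R l Q ∈
        (q 0).comap (Polynomial.eval₂RingHom (aeval (R := R) (Fin.tail f)).toRingHom (f 0)) := by
      simpa [aeval_eq_eval₂_finSuccEquiv] using hQ
    rw [h₀, Ideal.mem_bot] at this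
    simpa using this

end MvPolynomial

section TranscendenceDegree

variable (K : Type*) {A : Type*} [Field K] [CommRing A] [Algebra K A]

theorem PrimeSpectrum.exists_algebraicIndependent_of_ltSeries (p : LTSeries (PrimeSpectrum A)) :
    ∃ f : Fin p.length → A, AlgebraicIndependent K f := by
  have hstep (i : Fin p.length) : (p i.castSucc).asIdeal < (p i.succ).asIdeal :=
    p.strictMono i.castSucc_lt_succ
  choose f hf hf' using fun i => SetLike.exists_of_lt (hstep i)
  have hK : (p (Fin.last _)).asIdeal.comap (algebraMap K A) = ⊥ :=
    (Ideal.eq_bot_or_top _).resolve_right (Ideal.IsPrime.comap _).ne_top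
  have hker := MvPolynomial.comap_aeval_eq_bot_of_chain (fun i => (p i).asIdeal)
    (fun i => (p i).isPrime) (fun i j hij => p.monotone hij) hK f hf hf'
  refine ⟨f, algebraicIndependent_iff_injective_aeval.mpr <|
    (injective_iff_map_eq_zero _).mpr fun Q hQ => ?_⟩
  have : Q ∈ (p 0).asIdeal.comap (MvPolynomial.aeval (R := K) f) := by simp [hQ]
  rwa [hker, Ideal.mem_bot] at this

theorem ringKrullDim_le_of_trdeg_le {n : ℕ} (h : Algebra.trdeg K A ≤ n) :
    ringKrullDim A ≤ n := by
  refine iSup_le fun p => ?_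
  obtain ⟨f, hf⟩ := PrimeSpectrum.exists_algebraicIndependent_of_ltSeries K p
  have := hf.lift_cardinalMk_le_trdeg.trans (Cardinal.lift_le.mpr h)
  simp only [Cardinal.mk_fintype, Fintype.card_fin, Cardinal.lift_natCast, Nat.cast_le] at this
  exact_mod_cast this

end TranscendenceDegree

namespace AddMonoidAlgebra

section AlgebraicExponents

variable {k G : Type*} [CommRing k] [Nontrivial k] [AddCommGroup G]

def algebraicExponents (R : Subalgebra k (AddMonoidAlgebra k G)) [NoZeroDivisors R] :
    AddSubgroup G where
  carrier := {g | IsAlgebraic R (single g (1 : k))}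
  zero_mem' := by simpa [← one_def] using isAlgebraic_one
  add_mem' ha hb := by simpa [single_mul_single] using ha.mul hb
  neg_mem' {g} hg := by
    have hunit : IsUnit (single g (1 : k)) :=
      IsUnit.of_mul_eq_one (single (-g) 1) (by simp [single_mul_single, ← one_def])
    refine hg.of_mul hunit.mem_nonZeroDivisors ?_
    simpa [single_mul_single, ← one_def] using isAlgebraic_one

variable {R : Subalgebra k (AddMonoidAlgebra k G)} [NoZeroDivisors R]

theorem mem_algebraicExponents {g : G} :
    g ∈ algebraicExponents R ↔ IsAlgebraic R (single g (1 : k)) := Iff.rfl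

theorem mem_algebraicExponents_of_nsmul_mem {g : G} {N : ℕ} (hN : 0 < N)
    (h : N • g ∈ algebraicExponents R) : g ∈ algebraicExponents R :=
  IsAlgebraic.of_pow hN (by rw [single_pow, one_pow]; exact h)

end AlgebraicExponents

section PiRat

variable (K ι : Type*) [Field K] [Fintype ι] [DecidableEq ι]

theorem algebraicExponents_adjoin_single_eq_top :
    algebraicExponents (Algebra.adjoin K
      (Set.range fun i : ι => single (Pi.single i (1 : ℚ)) (1 : K))) = ⊤ := by
  set R := Algebra.adjoin K (Set.range fun i : ι => single (Pi.single i (1 : ℚ)) (1 : K))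
  have hbasis (i : ι) : (Pi.single i 1 : ι → ℚ) ∈ algebraicExponents R :=
    isAlgebraic_algebraMap (⟨_, Algebra.subset_adjoin ⟨i, rfl⟩⟩ : R)
  refine eq_top_iff.mpr fun q _ => ?_
  rw [← Finset.univ_sum_single q]
  refine sum_mem fun i _ => mem_algebraicExponents_of_nsmul_mem (q i).den_pos ?_
  have : (q i).den • (Pi.single i (q i) : ι → ℚ) = (q i).num • (Pi.single i 1 : ι → ℚ) := by
    rw [← Pi.single_smul, ← Pi.single_smul]
    simp
  rw [this]
  exact zsmul_mem (hbasis i) _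

theorem trdeg_pi_rat_le : Algebra.trdeg K (AddMonoidAlgebra K (ι → ℚ)) ≤ Fintype.card ι := by
  set s := Set.range fun i : ι => single (Pi.single i (1 : ℚ)) (1 : K)
  have : Algebra.IsAlgebraic (Algebra.adjoin K s) (AddMonoidAlgebra K (ι → ℚ)) := by
    refine ⟨fun x => x.induction_linear isAlgebraic_zero (fun _ _ => .add) fun q c => ?_⟩
    have hq : q ∈ algebraicExponents (Algebra.adjoin K s) := by
      rw [algebraicExponents_adjoin_single_eq_top]; trivial
    have := (mem_algebraicExponents.mp hq).smul (algebraMap K (Algebra.adjoin K s) c)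
    simpa [algebraMap_smul, smul_single'] using this
  calc Algebra.trdeg K (AddMonoidAlgebra K (ι → ℚ)) ≤ Cardinal.mk s :=
        Algebra.IsAlgebraic.trdeg_le_cardinalMk K s
    _ ≤ Fintype.card ι := by
        simpa using Cardinal.mk_range_le_lift (f := fun i : ι =>
          single (Pi.single i (1 : ℚ)) (1 : K))

end PiRat

theorem single_sub_one_mem_ker_mapDomainRingHom_iff {k G H : Type*} [CommRing k] [Nontrivial k]
    [AddMonoid G] [AddMonoid H] (φ : G →+ H) (g : G) :
    single g (1 : k) - 1 ∈ RingHom.ker (mapDomainRingHom k φ) ↔ φ g = 0 := by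
  rw [RingHom.mem_ker, map_sub, map_one, mapDomainRingHom_apply, mapDomain_single, sub_eq_zero,
    one_def, single_left_inj one_ne_zero]

theorem ker_mapDomainRingHom_indicatorHom_mono {k ι G : Type*} [CommRing k] [AddMonoid G]
    {s t : Set ι} (hts : t ⊆ s) :
    RingHom.ker (mapDomainRingHom k (Set.indicatorHom G s)) ≤
      RingHom.ker (mapDomainRingHom k (Set.indicatorHom G t)) := by
  have : Set.indicatorHom G t = (Set.indicatorHom G t).comp (Set.indicatorHom G s) := by
    ext g : 1
    change t.indicator g = t.indicator (s.indicator g)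
    rw [Set.indicator_indicator, Set.inter_eq_left.mpr hts]
  intro x hx
  rw [RingHom.mem_ker] at hx ⊢
  rw [this, mapDomainRingHom_comp, RingHom.comp_apply, hx, map_zero]

theorem natCast_le_ringKrullDim_pi (k G : Type*) [CommRing k] [IsDomain k]
    [AddCommMonoid G] [UniqueSums G] [Nontrivial G] (n : ℕ) :
    n ≤ ringKrullDim (AddMonoidAlgebra k (Fin n → G)) := by
  obtain ⟨a, ha⟩ := exists_ne (0 : G)
  let I (i : ℕ) := RingHom.ker (mapDomainRingHom k (Set.indicatorHom G {j : Fin n | i ≤ j}))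
  have hI (i : ℕ) (j : Fin n) : single (Pi.single j a) (1 : k) - 1 ∈ I i ↔ j < i := by
    rw [single_sub_one_mem_ker_mapDomainRingHom_iff]
    change Set.indicator _ _ = 0 ↔ _
    constructor
    · intro h
      simpa [ha] using congrFun h j
    · intro hji
      ext j'
      refine Set.indicator_apply_eq_zero.mpr fun hj' => Pi.single_eq_of_ne' (M := fun _ => G) ?_ a
      rintro rfl
      exact absurd hji (not_lt.mpr hj')
  let P (i : Fin (n + 1)) : PrimeSpectrum (AddMonoidAlgebra k (Fin n → G)) :=
    ⟨I i, RingHom.ker_isPrime _⟩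
  have hP : StrictMono P := by
    refine Fin.strictMono_iff_lt_succ.mpr fun i => show I i.castSucc < I i.succ from
      SetLike.lt_iff_le_and_exists.mpr ⟨ker_mapDomainRingHom_indicatorHom_mono fun j hj => ?_,
        _, (hI _ i).mpr ?_, (hI _ i).not.mpr ?_⟩
    · simp only [Set.mem_ofPred_eq, Fin.val_succ, Fin.val_castSucc] at hj ⊢
      omega
    · simp
    · simp
  exact Order.LTSeries.length_le_krullDim (LTSeries.mk n P hP)

end AddMonoidAlgebra

/-- For a field `K`, the Krull dimension of the posynomial ring
`Pos(K,ℚ)[x₁,…,xₙ] = AddMonoidAlgebra K (Fin n → ℚ)` equals `n`. -/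
theorem stmt_6 (K : Type*) [Field K] (n : ℕ) :
    ringKrullDim (AddMonoidAlgebra K (Fin n → ℚ)) = n :=
  le_antisymm
    (ringKrullDim_le_of_trdeg_le K (by simpa using AddMonoidAlgebra.trdeg_pi_rat_le K (Fin n)))
    (AddMonoidAlgebra.natCast_le_ringKrullDim_pi K ℚ n)
end

section
/- Let K be a field and let φ : AddMonoidAlgebra K (Fin n → ℤ) →+* AddMonoidAlgebra K (Fin n → ℚ) be the ring homomorphism induced by mapping each exponent vector s ∈ ℤⁿ to its image in ℚⁿ under the canonical inclusion (mapping single s c to single (↑s) c). Then every element of AddMonoidAlgebra K (Fin n → ℚ) is integral over the image of φ; that is, φ is an integral ring homomorphism. -/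
/-!
Every exponent vector `q ∈ ℚⁿ` has a positive multiple `m • q` in `ℤⁿ` (take `m` the product of
the denominators), so each monomial `x^q` is a root of `X^m - x^{m q}`, a monic polynomial over
the image of the Laurent polynomial ring. Sums of integral elements are integral.
-/

open AddMonoidAlgebra

theorem Rat.exists_pos_nsmul_eq_intCast {ι : Type*} [Fintype ι] (q : ι → ℚ) :
    ∃ m : ℕ, 0 < m ∧ ∃ s : ι → ℤ, (fun i => (s i : ℚ)) = m • q := by
  refine ⟨∏ i, (q i).den, Finset.prod_pos fun i _ => (q i).den_pos, ?_⟩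
  have hdvd (i : ι) : (q i).den ∣ ∏ j, (q j).den := Finset.dvd_prod_of_mem _ (Finset.mem_univ i)
  choose k hk using hdvd
  refine ⟨fun i => k i * (q i).num, funext fun i => ?_⟩
  rw [Pi.smul_apply, hk i, nsmul_eq_mul, Nat.cast_mul, mul_comm ((q i).den : ℚ), mul_assoc,
    Rat.den_mul_eq_num]
  push_cast
  ring

theorem AddMonoidAlgebra.isIntegral_of_nsmul_mem_range {k G H : Type*} [CommRing k]
    [AddCommMonoid G] [AddCommMonoid H] (f : G → H) (φ : k[G] →+* k[H])
    (hφ : ∀ g c, φ (single g c) = single (f g) c)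
    (hf : ∀ h, ∃ m : ℕ, 0 < m ∧ ∃ g, f g = m • h) : φ.IsIntegral := by
  let := φ.toAlgebra
  have hsingle (h : H) (c : k) : IsIntegral k[G] (single h c) := by
    obtain ⟨m, hm, g, hg⟩ := hf h
    refine IsIntegral.of_pow hm ?_
    rw [single_pow, ← hg, ← hφ]
    exact isIntegral_algebraMap
  intro x
  induction x using AddMonoidAlgebra.induction with
  | zero => exact isIntegral_zero
  | single_add h c _ _ _ ih => exact (hsingle h c).add ih

/-- For a field `K`, the ring homomorphism
`φ : AddMonoidAlgebra K (Fin n → ℤ) →+* AddMonoidAlgebra K (Fin n → ℚ)`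
induced by the canonical inclusion of exponents `ℤⁿ ↪ ℚⁿ`
(i.e. `single s c ↦ single ↑s c`) is integral:
every element of `AddMonoidAlgebra K (Fin n → ℚ)` is integral over its image. -/
theorem stmt_7 (K : Type*) [Field K] (n : ℕ)
    (φ : AddMonoidAlgebra K (Fin n → ℤ) →+* AddMonoidAlgebra K (Fin n → ℚ))
    (hφ : ∀ (s : Fin n → ℤ) (c : K),
      φ (AddMonoidAlgebra.single s c) =
        AddMonoidAlgebra.single (fun i => (s i : ℚ)) c) :
    φ.IsIntegral :=
  isIntegral_of_nsmul_mem_range _ φ hφ Rat.exists_pos_nsmul_eq_intCast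
end

section
/- Let R be a commutative integral domain. The ideal I of AddMonoidAlgebra R ℚ generated by the set { single (1/n) 1 - 1 : n a positive natural number } is a prime ideal. -/
/-!
The augmentation `R[G] → R`, `x^g ↦ 1`, has the domain `R` as image, so its kernel is prime.
That kernel is spanned by the elements `x^g - 1`, and since `x^g x^h - 1 = x^g (x^h - 1) + (x^g - 1)`
it suffices to take `g` in a generating set of `G`. The unit fractions `1/n` generate `ℚ`.
-/

open AddMonoidAlgebra

theorem Rat.addSubgroup_closure_one_div_nat_eq_top :
    AddSubgroup.closure {q : ℚ | ∃ n : ℕ, 0 < n ∧ q = 1 / n} = ⊤ := by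
  refine (AddSubgroup.eq_top_iff' _).2 fun q ↦ ?_
  have hden : 1 / (q.den : ℚ) ∈ AddSubgroup.closure {q : ℚ | ∃ n : ℕ, 0 < n ∧ q = 1 / n} :=
    AddSubgroup.subset_closure ⟨q.den, q.pos, rfl⟩
  simpa only [zsmul_eq_mul, mul_one_div, Rat.num_div_den] using
    AddSubgroup.zsmul_mem _ hden q.num

namespace AddMonoidAlgebra

variable {R G : Type*} [CommRing R] [AddCommGroup G]

noncomputable def augmentation : R[G] →ₐ[R] R := lift R R G 1

@[simp]
theorem augmentation_single (g : G) (r : R) : augmentation (single g r) = r := by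
  simp [augmentation, lift_single]

theorem single_one_sub_one_mem_of_mem_closure {I : Ideal R[G]} {s : Set G}
    (hs : ∀ g ∈ s, single g (1 : R) - 1 ∈ I) {g : G} (hg : g ∈ AddSubgroup.closure s) :
    single g (1 : R) - 1 ∈ I := by
  induction hg using AddSubgroup.closure_induction with
  | mem g hg => exact hs g hg
  | zero => simp [← one_def]
  | add g h _ _ hg hh =>
    have : single (g + h) (1 : R) - 1 = single g 1 * (single h 1 - 1) + (single g 1 - 1) := by
      rw [mul_sub, single_mul_single, mul_one]; ring
    rw [this]
    exact I.add_mem (I.mul_mem_left _ hh) hg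
  | neg g _ hg =>
    have : single (-g) (1 : R) - 1 = -(single (-g) 1 * (single g 1 - 1)) := by
      rw [mul_sub, single_mul_single, mul_one, neg_add_cancel, ← one_def]; ring
    rw [this]
    exact I.neg_mem (I.mul_mem_left _ hg)

theorem sub_algebraMap_augmentation_mem {I : Ideal R[G]}
    (hI : ∀ g : G, single g (1 : R) - 1 ∈ I) (f : R[G]) :
    f - algebraMap R R[G] (augmentation f) ∈ I := by
  induction f using AddMonoidAlgebra.induction_linear with
  | zero => simp
  | add f₁ f₂ h₁ h₂ =>
    rw [map_add, map_add, add_sub_add_comm]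
    exact I.add_mem h₁ h₂
  | single g r =>
    have : single g r - algebraMap R R[G] (augmentation (single g r)) =
        single 0 r * (single g 1 - 1) := by
      rw [augmentation_single, mul_sub, single_mul_single, zero_add, mul_one, mul_one]
      rfl
    rw [this]
    exact I.mul_mem_left _ (hI g)

theorem span_single_one_sub_one_eq_ker_augmentation {s : Set G}
    (hs : AddSubgroup.closure s = ⊤) :
    Ideal.span ((fun g ↦ single g (1 : R) - 1) '' s) = RingHom.ker (augmentation (R := R)) := by
  refine le_antisymm (Ideal.span_le.2 ?_) fun f hf ↦ ?_
  · rintro _ ⟨g, -, rfl⟩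
    simp
  · have hgen (g : G) : single g (1 : R) - 1 ∈ Ideal.span ((fun g ↦ single g (1 : R) - 1) '' s) := by
      refine single_one_sub_one_mem_of_mem_closure (s := s) (fun g hg ↦ ?_) (by simp [hs])
      apply Ideal.subset_span
      exact Set.mem_image_of_mem _ hg
    simpa [RingHom.mem_ker.1 hf] using sub_algebraMap_augmentation_mem hgen f

end AddMonoidAlgebra

/-- For a commutative integral domain `R`, the ideal of
`AddMonoidAlgebra R ℚ` generated by `{ x^(1/n) - 1 : n > 0 }`,
i.e. by the elements `single (1/n) 1 - 1`, is prime. -/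
theorem stmt_8 (R : Type*) [CommRing R] [IsDomain R] :
    (Ideal.span {f : AddMonoidAlgebra R ℚ |
        ∃ n : ℕ, 0 < n ∧
          f = AddMonoidAlgebra.single (1 / (n : ℚ)) (1 : R) - 1}).IsPrime := by
  have hset : {f : AddMonoidAlgebra R ℚ | ∃ n : ℕ, 0 < n ∧ f = single (1 / (n : ℚ)) (1 : R) - 1} =
      (fun q ↦ single q (1 : R) - 1) '' {q : ℚ | ∃ n : ℕ, 0 < n ∧ q = 1 / n} := by
    ext f
    constructor
    · rintro ⟨n, hn, rfl⟩
      exact ⟨_, ⟨n, hn, rfl⟩, rfl⟩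
    · rintro ⟨_, ⟨n, hn, rfl⟩, rfl⟩
      exact ⟨n, hn, rfl⟩
  rw [hset, span_single_one_sub_one_eq_ker_augmentation Rat.addSubgroup_closure_one_div_nat_eq_top]
  exact RingHom.ker_isPrime _
end

section
/- Let K be an algebraically closed field and let I be an ideal of the Laurent polynomial ring AddMonoidAlgebra K (Fin n → ℤ). Then there exists a point a : Fin n → Kˣ with ev_a f = 0 for every f ∈ I (i.e., V_Pos(I) ≠ ∅) if and only if I is a proper ideal (I ≠ ⊤). -/
/-!
By the Nullstellensatz (Zariski's lemma), a proper ideal of a finitely generated algebra over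
an algebraically closed field `K` lies in the kernel of a `K`-algebra homomorphism to `K`.
A `K`-algebra homomorphism out of the Laurent polynomial ring is determined by the images of
the variables, which are units since the variables are; so it is evaluation at a point of
`(Kˣ)ⁿ`.
-/

/-- Evaluation of a Laurent polynomial `f ∈ AddMonoidAlgebra K (Fin n → ℤ)` at a
point `a : Fin n → Kˣ` with all coordinates invertible: this is the function
underlying the evaluation ring homomorphism determined by
`single s c ↦ c * ∏ i, (a i : K) ^ (s i)` (integer powers). -/
noncomputable def laurentEval {K : Type*} [Field K] {n : ℕ} (a : Fin n → Kˣ)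
    (f : AddMonoidAlgebra K (Fin n → ℤ)) : K :=
  f.coeff.sum fun s c => c * ∏ i, ((a i : K) ^ (s i))

theorem Algebra.FiniteType.exists_algHom_le_ker {K A : Type*} [Field K] [IsAlgClosed K]
    [CommRing A] [Algebra K A] [Algebra.FiniteType K A] {I : Ideal A} (hI : I ≠ ⊤) :
    ∃ φ : A →ₐ[K] K, I ≤ RingHom.ker φ := by
  obtain ⟨m, hm, hIm⟩ := Ideal.exists_le_maximal I hI
  let : Field (A ⧸ m) := Ideal.Quotient.field m
  have : Algebra.FiniteType K (A ⧸ m) :=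
    .of_surjective (Ideal.Quotient.mkₐ K m) (Ideal.Quotient.mkₐ_surjective K m)
  have : Module.Finite K (A ⧸ m) := finite_of_finite_type_of_isJacobsonRing K (A ⧸ m)
  refine ⟨(IsAlgClosed.lift : A ⧸ m →ₐ[K] K).comp (Ideal.Quotient.mkₐ K m), fun f hf => ?_⟩
  simp [RingHom.mem_ker, Ideal.Quotient.eq_zero_iff_mem.mpr (hIm hf)]

theorem MonoidHom.map_ofAdd_eq_prod_zpow {ι G : Type*} [Fintype ι] [DecidableEq ι] [CommGroup G]
    (ψ : Multiplicative (ι → ℤ) →* G) (s : ι → ℤ) :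
    ψ (.ofAdd s) = ∏ i, ψ (.ofAdd (Pi.single i 1)) ^ s i := by
  conv_lhs => rw [← Finset.univ_sum_single s]
  rw [ofAdd_sum, map_prod]
  refine Finset.prod_congr rfl fun i _ => ?_
  rw [← map_zpow, ← ofAdd_zsmul, ← Pi.single_smul, smul_eq_mul, mul_one]

theorem laurentEval_one {K : Type*} [Field K] {n : ℕ} (a : Fin n → Kˣ) :
    laurentEval a 1 = 1 := by
  simp [laurentEval, AddMonoidAlgebra.one_def]

theorem exists_laurentEval_eq {K : Type*} [Field K] {n : ℕ}
    (φ : AddMonoidAlgebra K (Fin n → ℤ) →ₐ[K] K) :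
    ∃ a : Fin n → Kˣ, ∀ f, laurentEval a f = φ f := by
  let ψ := ((φ : AddMonoidAlgebra K (Fin n → ℤ) →* K).comp (AddMonoidAlgebra.of K _)).toHomUnits
  refine ⟨fun i => ψ (.ofAdd (Pi.single i 1)), fun f => ?_⟩
  rw [AddMonoidAlgebra.lift_unique φ f, laurentEval]
  refine Finsupp.sum_congr fun s _ => ?_
  have hψ : φ (AddMonoidAlgebra.single s 1) = ψ (.ofAdd s) := rfl
  rw [hψ, ψ.map_ofAdd_eq_prod_zpow, smul_eq_mul]
  push_cast
  rfl

/-- Nullstellensatz for Laurent polynomials: For an algebraically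
closed field `K` and an ideal `I` of the Laurent polynomial ring
`AddMonoidAlgebra K (Fin n → ℤ)`, the zero set `V_Pos(I) ⊆ (Kˣ)ⁿ` is nonempty
iff `I` is a proper ideal. -/
theorem stmt_9 (K : Type*) [Field K] [IsAlgClosed K] (n : ℕ)
    (I : Ideal (AddMonoidAlgebra K (Fin n → ℤ))) :
    (∃ a : Fin n → Kˣ, ∀ f ∈ I, laurentEval a f = 0) ↔ I ≠ ⊤ := by
  constructor
  · rintro ⟨a, ha⟩ rfl
    simpa [laurentEval_one] using ha 1 Submodule.mem_top
  · intro hI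
    obtain ⟨φ, hφ⟩ := Algebra.FiniteType.exists_algHom_le_ker (K := K) hI
    obtain ⟨a, ha⟩ := exists_laurentEval_eq φ
    exact ⟨a, fun f hf => (ha f).trans (hφ hf)⟩
end

section
/- Let K be a field of characteristic 0 and let p₀, p₁, …, pₙ be pairwise distinct prime numbers. Then in the group algebra AddMonoidAlgebra K ℚ, the element single (1/p₀) 1 - 1 does not belong to the ideal generated by { single (1/pᵢ) 1 - 1 : i = 1,…,n }. -/
/-!
Let `N = p₁ ⋯ pₙ` and `G = (1/N)ℤ ≤ ℚ`. The ring map `K[ℚ] → K[ℚ ⧸ G]` induced by the quotient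
kills `x^(1/pᵢ) - 1` for `i ≥ 1`, because `pᵢ ∣ N`, hence kills the whole ideal; it does not kill
`x^(1/p₀) - 1`, because `p₀ ∤ N`.
-/

open AddMonoidAlgebra

theorem AddMonoidAlgebra.single_sub_one_mem_ker_mapDomainRingHom_mk_iff
    {R M : Type*} [Ring R] [Nontrivial R] [AddCommGroup M] (G : AddSubgroup M) (m : M) :
    single m (1 : R) - 1 ∈ RingHom.ker (mapDomainRingHom R (QuotientAddGroup.mk' G)) ↔
      m ∈ G := by
  rw [RingHom.mem_ker, map_sub, map_one, sub_eq_zero, mapDomainRingHom_apply,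
    mapDomain_single, one_def, single_left_inj one_ne_zero, QuotientAddGroup.mk'_apply,
    QuotientAddGroup.eq_zero_iff]

theorem Rat.one_div_mem_zmultiples_one_div_iff {d N : ℕ} (hd : d ≠ 0) (hN : N ≠ 0) :
    (1 / d : ℚ) ∈ AddSubgroup.zmultiples (1 / N : ℚ) ↔ d ∣ N := by
  constructor
  · rintro ⟨z, hz⟩
    simp only [zsmul_eq_mul] at hz
    field_simp at hz
    exact Int.natCast_dvd_natCast.mp ⟨z, by exact_mod_cast (by linarith : (N : ℚ) = d * z)⟩
  · rintro ⟨k, rfl⟩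
    refine ⟨k, ?_⟩
    have hk : (k : ℚ) ≠ 0 := by exact_mod_cast right_ne_zero_of_mul hN
    simp only [zsmul_eq_mul, Int.cast_natCast, Nat.cast_mul]
    field_simp

theorem stmt_11_general (K : Type*) [Field K] (n : ℕ)
    (p : Fin (n + 1) → ℕ) (hp : ∀ i, (p i).Prime)
    (hinj : Function.Injective p) :
    AddMonoidAlgebra.single (1 / (p 0 : ℚ)) (1 : K) - 1 ∉
      Ideal.span {f : AddMonoidAlgebra K ℚ |
        ∃ i : Fin (n + 1), i ≠ 0 ∧
          f = AddMonoidAlgebra.single (1 / (p i : ℚ)) (1 : K) - 1} := by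
  intro hmem
  set N := ∏ i ∈ Finset.univ.erase 0, p i
  have hN : N ≠ 0 := Finset.prod_ne_zero_iff.mpr fun i _ => (hp i).ne_zero
  set G := AddSubgroup.zmultiples (1 / N : ℚ)
  have hspan : Ideal.span {f : AddMonoidAlgebra K ℚ |
      ∃ i : Fin (n + 1), i ≠ 0 ∧ f = single (1 / (p i : ℚ)) (1 : K) - 1} ≤
        RingHom.ker (mapDomainRingHom K (QuotientAddGroup.mk' G)) := by
    rw [Ideal.span_le]
    rintro f ⟨i, hi, rfl⟩
    rw [SetLike.mem_coe, single_sub_one_mem_ker_mapDomainRingHom_mk_iff,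
      Rat.one_div_mem_zmultiples_one_div_iff (hp i).ne_zero hN]
    exact Finset.dvd_prod_of_mem p (Finset.mem_erase.mpr ⟨hi, Finset.mem_univ i⟩)
  have hdvd : p 0 ∣ N := by
    rw [← Rat.one_div_mem_zmultiples_one_div_iff (hp 0).ne_zero hN,
      ← single_sub_one_mem_ker_mapDomainRingHom_mk_iff (R := K)]
    exact hspan hmem
  obtain ⟨i, hi, hi0⟩ := (hp 0).prime.exists_mem_finset_dvd hdvd
  exact (Finset.mem_erase.mp hi).1
    (hinj ((Nat.prime_dvd_prime_iff_eq (hp 0) (hp i)).mp hi0)).symm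

/-- Let `K` be a field of characteristic 0 and `p 0, p 1, …, p n`
pairwise distinct prime numbers. Then in `AddMonoidAlgebra K ℚ`, the element
`single (1/p 0) 1 - 1` (the posynomial `x^(1/p₀) - 1`) does not belong to the
ideal generated by the elements `single (1/p i) 1 - 1` for `i ≠ 0`. -/
theorem stmt_11 (K : Type*) [Field K] [CharZero K] (n : ℕ)
    (p : Fin (n + 1) → ℕ) (hp : ∀ i, (p i).Prime)
    (hinj : Function.Injective p) :
    AddMonoidAlgebra.single (1 / (p 0 : ℚ)) (1 : K) - 1 ∉
      Ideal.span {f : AddMonoidAlgebra K ℚ |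
        ∃ i : Fin (n + 1), i ≠ 0 ∧
          f = AddMonoidAlgebra.single (1 / (p i : ℚ)) (1 : K) - 1} :=
  stmt_11_general K n p hp hinj
end

section
/- Let K be a field of characteristic 0, let A be any set of prime numbers, and let I be the ideal of AddMonoidAlgebra K ℚ generated by { single (1/q) 1 - 1 : q ∈ A }. Then for every prime number p, the element single (1/p) 1 - 1 belongs to I if and only if p ∈ A. -/
/-!
The ideal of `k[G]` generated by the elements `single s 1 - 1`, `s ∈ S`, contains
`single g 1 - 1` exactly when `g` lies in the subgroup `H` generated by `S`: such
elements are closed under sums and negatives of exponents, and conversely the map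
`k[G] → k[G ⧸ H]` kills every generator but sends `single g 1 - 1` to zero only if
`g ∈ H`. In `ℚ`, the subgroup generated by the `1 / q` with `q ∈ A` consists of
`p`-adic integers whenever `p ∉ A`, so it does not contain `1 / p`.
-/

open AddMonoidAlgebra

namespace AddMonoidAlgebra

variable {k G : Type*} [CommRing k] [AddCommGroup G]

theorem single_sub_one_mem_span_of_mem_closure {S : Set G} {g : G}
    (hg : g ∈ AddSubgroup.closure S) :
    single g (1 : k) - 1 ∈ Ideal.span ((fun s => single s (1 : k) - 1) '' S) := by
  set I := Ideal.span ((fun s => single s (1 : k) - 1) '' S)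
  induction hg using AddSubgroup.closure_induction with
  | mem s hs => exact Ideal.subset_span ⟨s, hs, rfl⟩
  | zero => simp [one_def]
  | add a b _ _ ha hb =>
    have : single (a + b) (1 : k) - 1 = single a 1 * (single b 1 - 1) + (single a 1 - 1) := by
      rw [mul_sub, single_mul_single, mul_one, mul_one]; ring
    rw [this]
    exact I.add_mem (I.mul_mem_left _ hb) ha
  | neg a _ ha =>
    have : single (-a) (1 : k) - 1 = -single (-a) 1 * (single a 1 - 1) := by
      rw [neg_mul, mul_sub, single_mul_single, neg_add_cancel, mul_one, mul_one, ← one_def]; ring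
    rw [this]
    exact I.mul_mem_left _ ha

theorem mem_closure_of_single_sub_one_mem_span [Nontrivial k] {S : Set G} {g : G}
    (hg : single g (1 : k) - 1 ∈ Ideal.span ((fun s => single s (1 : k) - 1) '' S)) :
    g ∈ AddSubgroup.closure S := by
  set H := AddSubgroup.closure S
  let φ := mapDomainRingHom k (QuotientAddGroup.mk' H)
  have hφ (a : G) : φ (single a 1 - 1) = single (a : G ⧸ H) 1 - single 0 1 := by
    rw [map_sub, map_one, one_def]
    exact congrArg (· - _) mapDomain_single
  have hle : Ideal.span ((fun s => single s (1 : k) - 1) '' S) ≤ RingHom.ker φ := by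
    rw [Ideal.span_le]
    rintro _ ⟨s, hs, rfl⟩
    rw [SetLike.mem_coe, RingHom.mem_ker, hφ, (QuotientAddGroup.eq_zero_iff s).2
      (AddSubgroup.subset_closure hs), sub_self]
  have hker := hle hg
  rwa [RingHom.mem_ker, hφ, sub_eq_zero, single_left_inj one_ne_zero,
    QuotientAddGroup.eq_zero_iff] at hker

theorem single_sub_one_mem_span_iff [Nontrivial k] {S : Set G} {g : G} :
    single g (1 : k) - 1 ∈ Ideal.span ((fun s => single s (1 : k) - 1) '' S) ↔
      g ∈ AddSubgroup.closure S :=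
  ⟨mem_closure_of_single_sub_one_mem_span, single_sub_one_mem_span_of_mem_closure⟩

end AddMonoidAlgebra

namespace padicNorm

def leOneAddSubgroup (p : ℕ) [Fact p.Prime] : AddSubgroup ℚ where
  carrier := {x | padicNorm p x ≤ 1}
  zero_mem' := by simp
  add_mem' ha hb := padicNorm.nonarchimedean.trans (max_le ha hb)
  neg_mem' := by simp [padicNorm.neg]

end padicNorm

theorem Rat.one_div_mem_closure_one_div_primes_iff {A : Set ℕ} (hA : ∀ q ∈ A, q.Prime)
    {p : ℕ} (hp : p.Prime) :
    1 / (p : ℚ) ∈ AddSubgroup.closure ((fun q : ℕ => 1 / (q : ℚ)) '' A) ↔ p ∈ A := by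
  have := Fact.mk hp
  refine ⟨fun h => ?_, fun h => AddSubgroup.subset_closure ⟨p, h, rfl⟩⟩
  by_contra hpA
  have hle : AddSubgroup.closure ((fun q : ℕ => 1 / (q : ℚ)) '' A) ≤ padicNorm.leOneAddSubgroup p := by
    rw [AddSubgroup.closure_le]
    rintro _ ⟨q, hq, rfl⟩
    have := Fact.mk (hA q hq)
    have hqp : q ≠ p := fun h => hpA (h ▸ hq)
    show padicNorm p (1 / q) ≤ 1
    rw [padicNorm.div, padicNorm.one, padicNorm.padicNorm_of_prime_of_ne hqp.symm]
    norm_num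
  have hnorm : padicNorm p (1 / p) ≤ 1 := hle h
  rw [padicNorm.div, padicNorm.one, padicNorm.padicNorm_p_of_prime, one_div, inv_inv] at hnorm
  exact absurd hnorm (by exact_mod_cast hp.one_lt.not_ge)

theorem stmt_12_general (K : Type*) [Field K] (A : Set ℕ)
    (hA : ∀ q ∈ A, Nat.Prime q) (p : ℕ) (hp : p.Prime) :
    AddMonoidAlgebra.single (1 / (p : ℚ)) (1 : K) - 1 ∈
      Ideal.span ((fun q : ℕ =>
        AddMonoidAlgebra.single (1 / (q : ℚ)) (1 : K) - 1) '' A) ↔ p ∈ A := by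
  have key := single_sub_one_mem_span_iff (k := K) (S := (fun q : ℕ => 1 / (q : ℚ)) '' A)
    (g := 1 / (p : ℚ))
  rw [Set.image_image] at key
  rw [key, Rat.one_div_mem_closure_one_div_primes_iff hA hp]

/-- Let `K` be a field of characteristic 0, `A` a set of prime
numbers, and `I` the ideal of `AddMonoidAlgebra K ℚ` generated by
`{ single (1/q) 1 - 1 : q ∈ A }`. Then for every prime `p`, the element
`single (1/p) 1 - 1` belongs to `I` iff `p ∈ A`. -/
theorem stmt_12 (K : Type*) [Field K] [CharZero K] (A : Set ℕ)
    (hA : ∀ q ∈ A, Nat.Prime q) (p : ℕ) (hp : p.Prime) :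
    AddMonoidAlgebra.single (1 / (p : ℚ)) (1 : K) - 1 ∈
      Ideal.span ((fun q : ℕ =>
        AddMonoidAlgebra.single (1 / (q : ℚ)) (1 : K) - 1) '' A) ↔ p ∈ A :=
  stmt_12_general K A hA p hp
end

section
/- Let K be a field, let ι : MvPolynomial (Fin n) K →+* AddMonoidAlgebra K (Fin n → ℤ) be the ring homomorphism sending each monomial with exponent vector α ∈ ℕⁿ and coefficient c to single (↑α) c, and let g, f₁, …, f_k ∈ MvPolynomial (Fin n) K. Then ι g belongs to the ideal of AddMonoidAlgebra K (Fin n → ℤ) generated by ι f₁, …, ι f_k if and only if there exists λ ∈ ℕ such that (∏ i, X i)^λ · g belongs to the ideal of MvPolynomial (Fin n) K generated by f₁, …, f_k. -/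
/-!
The Laurent polynomial ring is the localization of the polynomial ring away from `x₁ ⋯ xₙ`:
the embedding is injective, `x₁ ⋯ xₙ` becomes the unit `single 1 1`, and multiplying a Laurent
polynomial by a large enough power of it clears all negative exponents. A polynomial lies in the
extension of an ideal `I` to a localization away from `u` iff some `u ^ λ * g` lies in `I`.
-/

open MvPolynomial AddMonoidAlgebra

namespace MvPolynomial

variable (σ : Type*) (R : Type*) [CommSemiring R]

def exponentToInt : (σ →₀ ℕ) →+ (σ → ℤ) where
  toFun α i := α i
  map_zero' := by ext; simp
  map_add' α β := by ext; simp

noncomputable def toLaurent : MvPolynomial σ R →+* AddMonoidAlgebra R (σ → ℤ) :=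
  AddMonoidAlgebra.mapDomainRingHom R (exponentToInt σ)

variable {σ R}

@[simp]
theorem toLaurent_monomial (α : σ →₀ ℕ) (c : R) :
    toLaurent σ R (monomial α c) = single (fun i => (α i : ℤ)) c :=
  AddMonoidAlgebra.mapDomain_single

theorem eq_toLaurent {ι : MvPolynomial σ R →+* AddMonoidAlgebra R (σ → ℤ)}
    (hι : ∀ (α : σ →₀ ℕ) (c : R), ι (monomial α c) = single (fun i => (α i : ℤ)) c) :
    ι = toLaurent σ R := by
  refine ringHom_ext (fun c => ?_) (fun i => ?_)
  · rw [← monomial_zero', hι, toLaurent_monomial]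
  · rw [X, hι, toLaurent_monomial]

theorem toLaurent_injective : Function.Injective (toLaurent σ R) :=
  AddMonoidAlgebra.mapDomain_injective fun _ _ h =>
    Finsupp.ext fun i => Nat.cast_injective (congrFun h i)

theorem toLaurent_prod_X [Fintype σ] :
    toLaurent σ R (∏ i, X i) = single 1 1 := by
  simp_rw [X, ← monomial_sum_one, toLaurent_monomial]
  congr 1
  ext j
  simp

theorem isUnit_toLaurent_prod_X [Fintype σ] : IsUnit (toLaurent σ R (∏ i, X i)) := by
  rw [toLaurent_prod_X]
  exact .of_mul_eq_one (single (-1) 1) (by rw [single_mul_single, add_neg_cancel, one_mul]; rfl)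

theorem exists_mul_toLaurent_prod_X_pow_eq [Fintype σ] (s : AddMonoidAlgebra R (σ → ℤ)) :
    ∃ (m : ℕ) (p : MvPolynomial σ R), s * toLaurent σ R (∏ i, X i) ^ m = toLaurent σ R p := by
  induction s using AddMonoidAlgebra.induction_linear with
  | zero => exact ⟨0, 0, by simp⟩
  | add s t hs ht =>
    obtain ⟨m, p, hp⟩ := hs
    obtain ⟨m', p', hp'⟩ := ht
    refine ⟨m + m', p * (∏ i, X i) ^ m' + p' * (∏ i, X i) ^ m, ?_⟩
    rw [map_add, map_mul, map_mul, map_pow, map_pow, ← hp, ← hp']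
    ring
  | single d c =>
    -- shifting every exponent by `m ≥ |d i|` makes it nonnegative
    set m := ∑ i, (d i).natAbs
    have hm (i : σ) : 0 ≤ d i + m := by
      have := Finset.single_le_sum (fun j _ => (d j).natAbs.zero_le) (Finset.mem_univ i)
      omega
    refine ⟨m, monomial (Finsupp.equivFunOnFinite.symm fun i => (d i + m).toNat) c, ?_⟩
    rw [toLaurent_prod_X, single_pow, single_mul_single, one_pow, mul_one, toLaurent_monomial]
    congr 1
    ext i
    simp [Int.toNat_of_nonneg (hm i)]

theorem isLocalization_away_toLaurent [Fintype σ] :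
    letI := (toLaurent σ R).toAlgebra
    IsLocalization.Away (∏ i, X i : MvPolynomial σ R) (AddMonoidAlgebra R (σ → ℤ)) :=
  letI := (toLaurent σ R).toAlgebra
  .mk _ isUnit_toLaurent_prod_X exists_mul_toLaurent_prod_X_pow_eq
    fun _ _ h => ⟨0, by rw [toLaurent_injective h]⟩

end MvPolynomial

/-- Let `K` be a field and `ι : MvPolynomial (Fin n) K →+*
AddMonoidAlgebra K (Fin n → ℤ)` the ring homomorphism sending the monomial with
exponent vector `α ∈ ℕⁿ` and coefficient `c` to `single ↑α c`. For polynomials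
`g, f 1, …, f k`, the image `ι g` lies in the ideal of the Laurent polynomial
ring generated by the `ι (f i)` iff `(∏ i, X i)^λ * g` lies in the ideal of
`MvPolynomial (Fin n) K` generated by the `f i` for some `λ ∈ ℕ`. -/
theorem stmt_14 (K : Type*) [Field K] (n k : ℕ)
    (ι : MvPolynomial (Fin n) K →+* AddMonoidAlgebra K (Fin n → ℤ))
    (hι : ∀ (α : Fin n →₀ ℕ) (c : K),
      ι (MvPolynomial.monomial α c) =
        AddMonoidAlgebra.single (fun i => (α i : ℤ)) c)
    (g : MvPolynomial (Fin n) K) (f : Fin k → MvPolynomial (Fin n) K) :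
    ι g ∈ Ideal.span (Set.range fun i => ι (f i)) ↔
      ∃ l : ℕ, (∏ i, MvPolynomial.X i : MvPolynomial (Fin n) K) ^ l * g ∈
        Ideal.span (Set.range f) := by
  obtain rfl := eq_toLaurent hι
  let := (toLaurent (Fin n) K).toAlgebra
  have := isLocalization_away_toLaurent (σ := Fin n) (R := K)
  rw [Set.range_comp' (toLaurent (Fin n) K) f, ← Ideal.map_span,
    ← RingHom.algebraMap_toAlgebra (toLaurent (Fin n) K),
    IsLocalization.algebraMap_mem_map_algebraMap_iff (Submonoid.powers (∏ i, X i))]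
  simp [Submonoid.mem_powers_iff]
end

section
/- Let K be a field, s a positive integer, and let D_s = { q : ℚ | s·q ∈ ℤ } (rationals with denominator dividing s). Let g, f₁, …, f_m ∈ AddMonoidAlgebra K ℚ all have support contained in D_s. If g lies in the ideal of AddMonoidAlgebra K ℚ generated by f₁, …, f_m, then there exist h₁, …, h_m ∈ AddMonoidAlgebra K ℚ, each with support contained in D_s, such that g = h₁·f₁ + ⋯ + h_m·f_m. -/
/-!
Write `g = ∑ cᵢ fᵢ` and let `π` keep only the terms of an element whose exponents lie in the
subgroup `D_s` of `ℚ`. Multiplication by an element supported in `D_s` maps each coset of `D_s`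
to itself, so `π (c * f) = π c * f` for such `f`; as `π g = g`, we get `g = ∑ π(cᵢ) fᵢ`.
-/

namespace AddMonoidAlgebra

variable {k G : Type*} [Semiring k]

section restrictSupport

variable (S : Set G) [DecidablePred (· ∈ S)]

noncomputable def restrictSupport : AddMonoidAlgebra k G →+ AddMonoidAlgebra k G :=
  coeffAddEquiv.symm.toAddMonoidHom.comp
    ((Finsupp.filterAddHom (· ∈ S)).comp coeffAddEquiv.toAddMonoidHom)

@[simp]
lemma coeff_restrictSupport (x : AddMonoidAlgebra k G) :
    (restrictSupport S x).coeff = x.coeff.filter (· ∈ S) :=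
  rfl

lemma restrictSupport_mem_supported (x : AddMonoidAlgebra k G) :
    restrictSupport S x ∈ supported k k S := by
  rw [mem_supported, coeff_restrictSupport, Finsupp.support_filter, Finset.coe_filter]
  exact fun _ hq ↦ hq.2

lemma restrictSupport_eq_self {x : AddMonoidAlgebra k G} (hx : x ∈ supported k k S) :
    restrictSupport S x = x :=
  coeff_injective <| (Finsupp.filter_eq_self_iff _ _).2 fun _ hq ↦
    hx (Finsupp.mem_support_iff.2 hq)

end restrictSupport

section AddGroup

variable [AddGroup G] (H : AddSubgroup G)

lemma restrictSupport_mul_of_mem_supported [DecidablePred (· ∈ H)] (x : AddMonoidAlgebra k G)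
    {y : AddMonoidAlgebra k G} (hy : y ∈ supported k k (H : Set G)) :
    restrictSupport (H : Set G) (x * y) = restrictSupport (H : Set G) x * y := by
  ext g
  rw [coeff_restrictSupport, coeff_mul_apply_right]
  have hcoset : ∀ h ∈ y.coeff.support, g + -h ∈ (H : Set G) ↔ g ∈ (H : Set G) :=
    fun h hh ↦ H.add_mem_cancel_right (H.neg_mem (hy hh))
  by_cases hg : g ∈ (H : Set G)
  · rw [Finsupp.filter_apply_pos _ _ hg, coeff_mul_apply_right]
    refine Finsupp.sum_congr fun h hh ↦ ?_
    rw [coeff_restrictSupport, Finsupp.filter_apply_pos _ _ ((hcoset h hh).2 hg)]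
  · rw [Finsupp.filter_apply_neg _ _ hg]
    refine (Finset.sum_eq_zero fun h hh ↦ ?_).symm
    simp only [coeff_restrictSupport, Finsupp.filter_apply_neg _ _ (mt (hcoset h hh).1 hg),
      zero_mul]

theorem exists_eq_sum_mul_of_mem_span {ι : Type*} [Fintype ι] {g : AddMonoidAlgebra k G}
    {f : ι → AddMonoidAlgebra k G} (hg : g ∈ supported k k (H : Set G))
    (hf : ∀ i, f i ∈ supported k k (H : Set G)) (hmem : g ∈ Ideal.span (Set.range f)) :
    ∃ h : ι → AddMonoidAlgebra k G,
      (∀ i, h i ∈ supported k k (H : Set G)) ∧ g = ∑ i, h i * f i := by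
  classical
  obtain ⟨c, rfl⟩ := Ideal.mem_span_range_iff_exists_fun.1 hmem
  refine ⟨fun i ↦ restrictSupport (H : Set G) (c i),
    fun i ↦ restrictSupport_mem_supported _ _, ?_⟩
  calc ∑ i, c i * f i = restrictSupport (H : Set G) (∑ i, c i * f i) :=
        (restrictSupport_eq_self _ hg).symm
    _ = ∑ i, restrictSupport (H : Set G) (c i) * f i := by
      simp only [map_sum, restrictSupport_mul_of_mem_supported _ _ (hf _)]

end AddGroup
end AddMonoidAlgebra

def ratDenomDvd (s : ℕ) : AddSubgroup ℚ :=
  (Int.castAddHom ℚ).range.comap (AddMonoidHom.mulLeft (s : ℚ))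

lemma mem_ratDenomDvd {s : ℕ} {q : ℚ} :
    q ∈ ratDenomDvd s ↔ ∃ z : ℤ, (s : ℚ) * q = z := by
  simp only [ratDenomDvd, AddSubgroup.mem_comap, AddMonoidHom.mem_range, Int.coe_castAddHom,
    AddMonoidHom.coe_mulLeft, eq_comm]

theorem stmt_15_general (K : Type*) [Field K] (s : ℕ)
    (m : ℕ) (g : AddMonoidAlgebra K ℚ) (f : Fin m → AddMonoidAlgebra K ℚ)
    (hg : ∀ q ∈ g.coeff.support, ∃ z : ℤ, (s : ℚ) * q = z)
    (hf : ∀ i, ∀ q ∈ (f i).coeff.support, ∃ z : ℤ, (s : ℚ) * q = z)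
    (hmem : g ∈ Ideal.span (Set.range f)) :
    ∃ h : Fin m → AddMonoidAlgebra K ℚ,
      (∀ i, ∀ q ∈ (h i).coeff.support, ∃ z : ℤ, (s : ℚ) * q = z) ∧
      g = ∑ i, h i * f i := by
  obtain ⟨h, hsupp, rfl⟩ := AddMonoidAlgebra.exists_eq_sum_mul_of_mem_span (ratDenomDvd s)
    (fun q hq ↦ mem_ratDenomDvd.2 (hg q hq)) (fun i q hq ↦ mem_ratDenomDvd.2 (hf i q hq)) hmem
  exact ⟨h, fun i q hq ↦ mem_ratDenomDvd.1 (hsupp i hq), rfl⟩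

/-- Let `K` be a field, `s` a positive integer, and
`D_s = { q : ℚ | s·q ∈ ℤ }`. If `g, f 1, …, f m ∈ AddMonoidAlgebra K ℚ` all
have support contained in `D_s` and `g` lies in the ideal generated by the
`f i`, then `g = ∑ i, h i * f i` for some `h i` whose supports are also
contained in `D_s`. -/
theorem stmt_15 (K : Type*) [Field K] (s : ℕ) (hs : 0 < s)
    (m : ℕ) (g : AddMonoidAlgebra K ℚ) (f : Fin m → AddMonoidAlgebra K ℚ)
    (hg : ∀ q ∈ g.coeff.support, ∃ z : ℤ, (s : ℚ) * q = z)
    (hf : ∀ i, ∀ q ∈ (f i).coeff.support, ∃ z : ℤ, (s : ℚ) * q = z)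
    (hmem : g ∈ Ideal.span (Set.range f)) :
    ∃ h : Fin m → AddMonoidAlgebra K ℚ,
      (∀ i, ∀ q ∈ (h i).coeff.support, ∃ z : ℤ, (s : ℚ) * q = z) ∧
      g = ∑ i, h i * f i :=
  stmt_15_general K s m g f hg hf hmem
end

section
/- Let K be a field. Then every finitely generated ideal of the group algebra AddMonoidAlgebra K ℚ is principal; that is, AddMonoidAlgebra K ℚ is a Bézout ring. -/
/-!
Any finitely many elements of `K[ℚ]` have exponents with a common denominator `n`, so they lie in
the image of `K[ℤ] → K[ℚ]`, `k ↦ k / n`. Now `K[ℤ] = K[T;T⁻¹]` is a localization of `K[X]`, hence a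
principal ideal ring, and the image of a principal ideal under a ring map is principal.
-/

open AddMonoidAlgebra Polynomial LaurentPolynomial

theorem IsLocalization.isPrincipalIdealRing {R S : Type*} [CommSemiring R] [CommSemiring S]
    [Algebra R S] (M : Submonoid R) [IsLocalization M S] [IsPrincipalIdealRing R] :
    IsPrincipalIdealRing S :=
  ⟨fun J => IsLocalization.map_under M S J ▸
    (IsPrincipalIdealRing.principal _).map_ringHom (algebraMap R S)⟩

instance LaurentPolynomial.instIsPrincipalIdealRing (K : Type*) [Field K] :
    IsPrincipalIdealRing K[T;T⁻¹] :=
  IsLocalization.isPrincipalIdealRing (Submonoid.powers (X : K[X]))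

theorem Ideal.isPrincipal_span_pair_map {R S F : Type*} [CommRing R] [IsBezout R] [Semiring S]
    [FunLike F R S] [RingHomClass F R S] (f : F) (a b : R) :
    (Ideal.span {f a, f b}).IsPrincipal := by
  rw [← Set.image_pair, ← Ideal.map_span]
  exact (IsBezout.span_pair_isPrincipal a b).map_ringHom f

theorem Finsupp.exists_mapDomain_eq_of_support_subset_range {α β R : Type*} [Semiring R]
    {f : α → β} {x : β →₀ R} (hx : ↑x.support ⊆ Set.range f) :
    ∃ y : α →₀ R, Finsupp.mapDomain f y = x := by
  have : x ∈ (supported R R (Set.univ : Set α)).map (lmapDomain R R f) := by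
    rwa [lmapDomain_supported, Set.image_univ, mem_supported]
  obtain ⟨y, -, hy⟩ := this
  exact ⟨y, hy⟩

theorem AddMonoidAlgebra.mem_range_mapDomainRingHom {R M N : Type*} [Semiring R] [AddMonoid M]
    [AddMonoid N] {f : M →+ N} {x : AddMonoidAlgebra R N} (hx : ↑x.coeff.support ⊆ Set.range f) :
    x ∈ Set.range (mapDomainRingHom R f) := by
  obtain ⟨y, hy⟩ := Finsupp.exists_mapDomain_eq_of_support_subset_range hx
  exact ⟨ofCoeff y, congrArg ofCoeff hy⟩

noncomputable def intDivAddHom (n : ℕ) : ℤ →+ ℚ where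
  toFun k := k / n
  map_zero' := by simp
  map_add' a b := by push_cast; ring

theorem mem_range_intDivAddHom {n : ℕ} (hn : n ≠ 0) {q : ℚ} (hq : q.den ∣ n) :
    q ∈ Set.range (intDivAddHom n) := by
  obtain ⟨c, rfl⟩ := hq
  have hc : (c : ℚ) ≠ 0 := by exact_mod_cast right_ne_zero_of_mul hn
  refine ⟨q.num * c, ?_⟩
  simp only [intDivAddHom, AddMonoidHom.coe_mk, ZeroHom.coe_mk]
  push_cast
  rw [mul_div_mul_right _ _ hc, Rat.num_div_den]

theorem AddMonoidAlgebra.exists_forall_mem_range_mapDomainRingHom_intDivAddHom {R : Type*}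
    [Semiring R] (s : Finset (AddMonoidAlgebra R ℚ)) :
    ∃ n : ℕ, ∀ x ∈ s, x ∈ Set.range (mapDomainRingHom R (intDivAddHom n)) := by
  refine ⟨∏ x ∈ s, ∏ q ∈ x.coeff.support, q.den, fun x hx => mem_range_mapDomainRingHom ?_⟩
  intro q hq
  refine mem_range_intDivAddHom (Finset.prod_ne_zero_iff.mpr fun y _ => ?_) ?_
  · exact Finset.prod_ne_zero_iff.mpr fun r _ => r.den_nz
  · exact (Finset.dvd_prod_of_mem _ hq).trans (Finset.dvd_prod_of_mem _ hx)

/-- For a field `K`, every finitely generated ideal of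
`AddMonoidAlgebra K ℚ` is principal, i.e. `AddMonoidAlgebra K ℚ` is a Bézout
ring. -/
theorem stmt_16 (K : Type*) [Field K] : IsBezout (AddMonoidAlgebra K ℚ) := by
  refine IsBezout.iff_span_pair_isPrincipal.mpr fun x y => ?_
  classical
  obtain ⟨n, hn⟩ := exists_forall_mem_range_mapDomainRingHom_intDivAddHom {x, y}
  obtain ⟨a, rfl⟩ := hn x (by simp)
  obtain ⟨b, rfl⟩ := hn y (by simp)
  exact Ideal.isPrincipal_span_pair_map _ a b
end

section
/- Let R be a commutative integral domain and let p ∈ R[X] be a polynomial not divisible by X (equivalently, with nonzero constant coefficient). Then p is irreducible in the polynomial ring R[X] if and only if its image toLaurent p is irreducible in the Laurent polynomial ring R[T;T⁻¹]. -/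
/-!
`R[T;T⁻¹]` is the localization of `R[X]` away from the prime element `X`. If `x` is prime in a
domain `A` and `x ∤ a`, then `a` is irreducible in `A` iff it is irreducible in `A[1/x]`: a
factorization `a = u * v` in `A[1/x]` clears denominators to `a * x ^ n = u₁ * v₁` in `A`, and
primality of `x` splits this as `a = b * c` with `u₁ = b * x ^ i`, `v₁ = c * x ^ j`; conversely the
only elements of `A` not divisible by `x` that become units in `A[1/x]` are the units of `A`.
-/

namespace IsLocalization.Away

variable {A B : Type*} [CommRing A] [IsDomain A] [CommRing B] [Algebra A B]
  {x : A} [IsLocalization.Away x B] {a : A}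

theorem isUnit_of_isUnit_algebraMap (hx : Prime x) (hxa : ¬ x ∣ a)
    (h : IsUnit (algebraMap A B a)) : IsUnit a := by
  obtain ⟨n, hn⟩ := (algebraMap_isUnit_iff x).1 h
  obtain ⟨i, -, hi⟩ := (dvd_prime_pow hx n).1 hn
  cases i with
  | zero => simpa using hi
  | succ i => exact absurd ((dvd_pow_self x i.succ_ne_zero).trans hi.symm.dvd) hxa

theorem irreducible_algebraMap_of_irreducible (hx : Prime x) (hxa : ¬ x ∣ a)
    (ha : Irreducible a) : Irreducible (algebraMap A B a) := by
  refine ⟨mt (isUnit_of_isUnit_algebraMap hx hxa) ha.not_isUnit, fun u v huv ↦ ?_⟩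
  obtain ⟨m, u₁, hu⟩ := surj x u
  obtain ⟨n, v₁, hv⟩ := surj x v
  have hcleared : u₁ * v₁ = a * x ^ (m + n) := by
    apply IsLocalization.injective B (powers_le_nonZeroDivisors_of_noZeroDivisors hx.ne_zero)
    rw [map_mul, ← hu, ← hv, map_mul, map_pow, huv]
    ring
  obtain ⟨i, j, b, c, -, rfl, rfl, rfl⟩ := mul_eq_mul_prime_pow hx hcleared
  have hxB : IsUnit (algebraMap A B x) := algebraMap_isUnit x
  rcases ha.isUnit_or_isUnit rfl with hb | hc
  · left
    rw [map_mul, map_pow] at hu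
    exact isUnit_of_mul_isUnit_left (hu ▸ (hb.map _).mul (hxB.pow i))
  · right
    rw [map_mul, map_pow] at hv
    exact isUnit_of_mul_isUnit_left (hv ▸ (hc.map _).mul (hxB.pow j))

theorem irreducible_of_irreducible_algebraMap (hx : Prime x) (hxa : ¬ x ∣ a)
    (h : Irreducible (algebraMap A B a)) : Irreducible a := by
  refine ⟨fun hu ↦ h.not_isUnit (hu.map _), ?_⟩
  rintro b c rfl
  exact (h.isUnit_or_isUnit (map_mul _ b c)).imp
    (isUnit_of_isUnit_algebraMap hx fun hb ↦ hxa (hb.mul_right c))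
    (isUnit_of_isUnit_algebraMap hx fun hc ↦ hxa (hc.mul_left b))

theorem irreducible_algebraMap_iff (hx : Prime x) (hxa : ¬ x ∣ a) :
    Irreducible (algebraMap A B a) ↔ Irreducible a :=
  ⟨irreducible_of_irreducible_algebraMap hx hxa, irreducible_algebraMap_of_irreducible hx hxa⟩

end IsLocalization.Away

open Polynomial LaurentPolynomial in
/-- Let `R` be a commutative integral domain and `p ∈ R[X]` a
polynomial not divisible by `X`. Then `p` is irreducible in `R[X]` iff its
image `toLaurent p` is irreducible in the Laurent polynomial ring `R[T;T⁻¹]`. -/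
theorem stmt_17 (R : Type*) [CommRing R] [IsDomain R] (p : R[X])
    (hp : ¬ (X ∣ p)) :
    Irreducible p ↔ Irreducible (Polynomial.toLaurent p) := by
  rw [← algebraMap_eq_toLaurent]
  exact (IsLocalization.Away.irreducible_algebraMap_iff prime_X hp).symm
end

section
/- The element single (1:ℚ) (1:ℚ) + single (0:ℚ) (2:ℚ) (the posynomial x + 2) is irreducible (atomic) in the group algebra AddMonoidAlgebra ℚ ℚ. -/
/-!
Let `p` be prime and `x + p = f * g` in `ℚ[x^ℚ]`. The lowest exponents of `f` and `g` add up to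
that of `f * g`, since the product of the two lowest coefficients cannot cancel; so after
multiplying `f` and `g` by inverse monomials both have nonnegative exponents. These lie in
`(1/N)ℕ` for a common denominator `N`, and with `y = x^(1/N)` the factorization becomes one of
`y^N + p` in `ℚ[y]`, which is irreducible by Eisenstein's criterion; hence one factor is a unit.
The same extreme-exponent argument shows that units are monomials, so `x + p` is not a unit.
-/

open Polynomial AddMonoidAlgebra

theorem Polynomial.isEisensteinAt_X_pow_add_C {p : ℤ} (hp : Prime p) {n : ℕ} (hn : n ≠ 0) :
    (X ^ n + C p).IsEisensteinAt (Ideal.span {p}) where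
  leading := by
    rw [(monic_X_pow_add_C p hn).leadingCoeff, Ideal.mem_span_singleton]
    exact hp.not_dvd_one
  mem {i} hi := by
    rw [natDegree_X_pow_add_C] at hi
    rw [coeff_add, coeff_X_pow, if_neg hi.ne, coeff_C, zero_add]
    split_ifs
    · exact Ideal.mem_span_singleton_self p
    · exact zero_mem _
  notMem := by
    rw [coeff_add, coeff_X_pow, if_neg (Ne.symm hn), coeff_C, if_pos rfl, zero_add,
      Ideal.span_singleton_pow, Ideal.mem_span_singleton, pow_two]
    exact fun h => hp.not_dvd_one ((mul_dvd_mul_iff_left hp.ne_zero).1 (by rwa [mul_one]))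

theorem Polynomial.irreducible_X_pow_add_C_of_prime {p : ℕ} (hp : p.Prime) {n : ℕ}
    (hn : n ≠ 0) :
    Irreducible (X ^ n + C (p : ℚ)) := by
  have hmonic : (X ^ n + C (p : ℤ)).Monic := monic_X_pow_add_C _ hn
  have hpZ : Prime (p : ℤ) := Nat.prime_iff_prime_int.1 hp
  have hZ : Irreducible (X ^ n + C (p : ℤ)) :=
    (isEisensteinAt_X_pow_add_C hpZ hn).irreducible
      ((Ideal.span_singleton_prime hpZ.ne_zero).2 hpZ) hmonic.isPrimitive
      (by rw [natDegree_X_pow_add_C]; exact Nat.pos_of_ne_zero hn)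
  simpa using (IsPrimitive.Int.irreducible_iff_irreducible_map_cast hmonic.isPrimitive).1 hZ

section LinearOrder

variable {G : Type*} [AddCommMonoid G] [LinearOrder G] [IsOrderedCancelAddMonoid G]

theorem Finset.uniqueAdd_max' {A B : Finset G} (hA : A.Nonempty) (hB : B.Nonempty) :
    UniqueAdd A B (A.max' hA) (B.max' hB) := fun _ _ ha hb hab =>
  (add_eq_add_iff_eq_and_eq (A.le_max' _ ha) (B.le_max' _ hb)).1 hab

theorem Finset.uniqueAdd_min' {A B : Finset G} (hA : A.Nonempty) (hB : B.Nonempty) :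
    UniqueAdd A B (A.min' hA) (B.min' hB) := fun _ _ ha hb hab =>
  (add_eq_add_iff_eq_and_eq (A.min'_le _ ha) (B.min'_le _ hb)).1 hab.symm |>.imp Eq.symm Eq.symm

namespace AddMonoidAlgebra

variable {R : Type*} [Semiring R] [NoZeroDivisors R]

theorem max'_add_max'_mem_support_coeff_mul {f g : R[G]} (hf : f.coeff.support.Nonempty)
    (hg : g.coeff.support.Nonempty) :
    f.coeff.support.max' hf + g.coeff.support.max' hg ∈ (f * g).coeff.support := by
  rw [Finsupp.mem_support_iff, coeff_mul_add_of_uniqueAdd (Finset.uniqueAdd_max' hf hg)]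
  exact mul_ne_zero (Finsupp.mem_support_iff.1 (Finset.max'_mem _ hf))
    (Finsupp.mem_support_iff.1 (Finset.max'_mem _ hg))

theorem min'_add_min'_mem_support_coeff_mul {f g : R[G]} (hf : f.coeff.support.Nonempty)
    (hg : g.coeff.support.Nonempty) :
    f.coeff.support.min' hf + g.coeff.support.min' hg ∈ (f * g).coeff.support := by
  rw [Finsupp.mem_support_iff, coeff_mul_add_of_uniqueAdd (Finset.uniqueAdd_min' hf hg)]
  exact mul_ne_zero (Finsupp.mem_support_iff.1 (Finset.min'_mem _ hf))
    (Finsupp.mem_support_iff.1 (Finset.min'_mem _ hg))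

theorem exists_support_coeff_eq_singleton_of_isUnit [Nontrivial R] {f : R[G]} (hf : IsUnit f) :
    ∃ a, f.coeff.support = {a} := by
  obtain ⟨g, hfg⟩ := hf.exists_right_inv
  have hf0 : f.coeff.support.Nonempty := by simpa using hf.ne_zero
  have hg0 : g.coeff.support.Nonempty := by simpa using right_ne_zero_of_mul_eq_one hfg
  have hmax := max'_add_max'_mem_support_coeff_mul hf0 hg0
  have hmin := min'_add_min'_mem_support_coeff_mul hf0 hg0
  rw [hfg, support_coeff_one, Finset.mem_zero] at hmax hmin
  have hmin_eq_max : f.coeff.support.min' hf0 = f.coeff.support.max' hf0 :=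
    ((add_eq_add_iff_eq_and_eq (Finset.min'_le_max' _ hf0) (Finset.min'_le_max' _ hg0)).1
      (hmin.trans hmax.symm)).1
  refine ⟨f.coeff.support.max' hf0, Finset.eq_singleton_iff_unique_mem.2 ⟨Finset.max'_mem _ _,
    fun x hx => le_antisymm (Finset.le_max' _ _ hx) (hmin_eq_max ▸ Finset.min'_le _ _ hx)⟩⟩

end AddMonoidAlgebra

end LinearOrder

namespace AddMonoidAlgebra

variable {R G : Type*} [CommSemiring R] [AddCommGroup G]

theorem isUnit_single_one (a : G) : IsUnit (single a 1 : R[G]) :=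
  (Group.isUnit (Multiplicative.ofAdd a)).map (of R G)

theorem exists_associated_factors_of_nonneg [NoZeroDivisors R] [LinearOrder G]
    [IsOrderedAddMonoid G] {f g p : R[G]} (hfg : f * g = p) (hp0 : p ≠ 0)
    (hp : ∀ x ∈ p.coeff.support, 0 ≤ x) :
    ∃ f' g', Associated f f' ∧ Associated g g' ∧ f' * g' = p ∧
      (∀ x ∈ f'.coeff.support, 0 ≤ x) ∧ ∀ x ∈ g'.coeff.support, 0 ≤ x := by
  classical
  have hf : f.coeff.support.Nonempty := by simpa using left_ne_zero_of_mul (hfg ▸ hp0)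
  have hg : g.coeff.support.Nonempty := by simpa using right_ne_zero_of_mul (hfg ▸ hp0)
  set a := f.coeff.support.min' hf
  have hsum : 0 ≤ a + g.coeff.support.min' hg :=
    hp _ (hfg ▸ min'_add_min'_mem_support_coeff_mul hf hg)
  refine ⟨f * single (-a) 1, g * single a 1, associated_mul_unit_right _ _ (isUnit_single_one _),
    associated_mul_unit_right _ _ (isUnit_single_one _), ?_, fun x hx => ?_, fun x hx => ?_⟩
  · rw [mul_mul_mul_comm, single_mul_single, neg_add_cancel, mul_one, ← one_def, mul_one, hfg]
  · obtain ⟨y, hy, rfl⟩ := Finset.mem_image.1 (support_coeff_mul_single_subset f 1 (-a) hx)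
    simpa [← sub_eq_add_neg] using Finset.min'_le _ _ hy
  · obtain ⟨y, hy, rfl⟩ := Finset.mem_image.1 (support_coeff_mul_single_subset g 1 a hx)
    calc 0 ≤ a + g.coeff.support.min' hg := hsum
      _ ≤ a + y := by gcongr; exact Finset.min'_le _ _ hy
      _ = y + a := add_comm a y

end AddMonoidAlgebra

def Rat.natDivHom (N : ℕ) : ℕ →+ ℚ where
  toFun m := m / N
  map_zero' := by simp
  map_add' _ _ := by push_cast; exact add_div _ _ _

@[simp] theorem Rat.natDivHom_apply (N m : ℕ) : Rat.natDivHom N m = m / N := rfl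

theorem Rat.natDivHom_injective {N : ℕ} (hN : N ≠ 0) : Function.Injective (Rat.natDivHom N) :=
  fun m m' h => by
    rw [natDivHom_apply, natDivHom_apply, div_left_inj' (Nat.cast_ne_zero.2 hN)] at h
    exact_mod_cast h

theorem Rat.mem_range_natDivHom {q : ℚ} (hq : 0 ≤ q) {N : ℕ} (hN : N ≠ 0)
    (hd : q.den ∣ N) :
    q ∈ Set.range (Rat.natDivHom N) := by
  obtain ⟨k, rfl⟩ := hd
  refine ⟨q.num.toNat * k, ?_⟩
  rw [natDivHom_apply, div_eq_iff (by exact_mod_cast hN), Nat.cast_mul, Nat.cast_mul, ← mul_assoc,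
    mul_den_eq_num, ← Int.cast_natCast, Int.toNat_of_nonneg (Rat.num_nonneg.2 hq)]

namespace AddMonoidAlgebra

theorem mem_range_mapDomainRingHom_natDivHom {R : Type*} [Semiring R] {N : ℕ} (hN : N ≠ 0)
    {f : R[ℚ]} (hf : ∀ q ∈ f.coeff.support, 0 ≤ q ∧ q.den ∣ N) :
    f ∈ Set.range (mapDomainRingHom R (Rat.natDivHom N)) :=
  ⟨comapDomain _ (Rat.natDivHom_injective hN) f, mapDomain_comapDomain
    (fun q hq => Rat.mem_range_natDivHom (hf q hq).1 hN (hf q hq).2) _⟩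

theorem exists_mem_range_mapDomainRingHom_natDivHom {R : Type*} [Semiring R] {f g : R[ℚ]}
    (hf : ∀ q ∈ f.coeff.support, 0 ≤ q) (hg : ∀ q ∈ g.coeff.support, 0 ≤ q) :
    ∃ N ≠ 0, f ∈ Set.range (mapDomainRingHom R (Rat.natDivHom N)) ∧
      g ∈ Set.range (mapDomainRingHom R (Rat.natDivHom N)) := by
  classical
  set N := ∏ q ∈ f.coeff.support ∪ g.coeff.support, q.den
  have hN : N ≠ 0 := Finset.prod_ne_zero_iff.2 fun q _ => q.den_nz
  have hden {q} (hq : q ∈ f.coeff.support ∪ g.coeff.support) : q.den ∣ N :=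
    Finset.dvd_prod_of_mem _ hq
  exact ⟨N, hN,
    mem_range_mapDomainRingHom_natDivHom hN fun q hq =>
      ⟨hf q hq, hden (Finset.mem_union_left _ hq)⟩,
    mem_range_mapDomainRingHom_natDivHom hN fun q hq =>
      ⟨hg q hq, hden (Finset.mem_union_right _ hq)⟩⟩

theorem mapDomainRingHom_natDivHom_toFinsuppIso_X_pow_add_C {R : Type*} [CommSemiring R]
    {N : ℕ} (hN : N ≠ 0) (c : R) :
    mapDomainRingHom R (Rat.natDivHom N) (toFinsuppIso R (X ^ N + C c)) =
      single 1 1 + single 0 c := by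
  rw [map_add, toFinsuppIso_apply, toFinsuppIso_apply, toFinsupp_X_pow, toFinsupp_C, map_add]
  simp [hN]

theorem irreducible_single_one_add_single_zero_of_prime {p : ℕ} (hp : p.Prime) :
    Irreducible (single (1 : ℚ) (1 : ℚ) + single (0 : ℚ) (p : ℚ) : ℚ[ℚ]) := by
  set P : ℚ[ℚ] := single 1 1 + single 0 (p : ℚ)
  have hsupp : P.coeff.support = {1, 0} := by
    rw [coeff_add, coeff_single, coeff_single, Finsupp.support_add_eq] <;> simp [hp.ne_zero]
  refine ⟨fun hu => ?_, fun f g hfg => ?_⟩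
  · obtain ⟨a, ha⟩ := exists_support_coeff_eq_singleton_of_isUnit hu
    simpa [ha] using congrArg Finset.card hsupp
  have hP0 : P ≠ 0 := by simp [← coeff_eq_zero, ← Finsupp.support_eq_empty, hsupp]
  obtain ⟨f', g', hf, hg, hfg', hf'0, hg'0⟩ :=
    exists_associated_factors_of_nonneg hfg.symm hP0 (by simp [hsupp])
  obtain ⟨N, hN, ⟨F, hF⟩, ⟨G, hG⟩⟩ :=
    exists_mem_range_mapDomainRingHom_natDivHom hf'0 hg'0
  set φ := mapDomainRingHom ℚ (Rat.natDivHom N)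
  have hFG : toFinsuppIso ℚ (X ^ N + C (p : ℚ)) = F * G := by
    refine mapDomain_injective (Rat.natDivHom_injective hN) (?_ : φ _ = φ _)
    rw [map_mul, hF, hG, hfg', mapDomainRingHom_natDivHom_toFinsuppIso_X_pow_add_C hN]
  rcases ((irreducible_X_pow_add_C_of_prime hp hN).map (toFinsuppIso ℚ)).isUnit_or_isUnit hFG
    with hFu | hGu
  · exact .inl (hf.isUnit_iff.2 (hF ▸ hFu.map φ))
  · exact .inr (hg.isUnit_iff.2 (hG ▸ hGu.map φ))

end AddMonoidAlgebra

/-- The posynomial `x + 2`, i.e. the element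
`single 1 1 + single 0 2` of the group algebra `AddMonoidAlgebra ℚ ℚ`, is
irreducible (atomic). -/
theorem stmt_18 :
    Irreducible (AddMonoidAlgebra.single (1 : ℚ) (1 : ℚ) +
      AddMonoidAlgebra.single (0 : ℚ) (2 : ℚ) : AddMonoidAlgebra ℚ ℚ) := by
  simpa using irreducible_single_one_add_single_zero_of_prime Nat.prime_two
end

section
/- The group algebras AddMonoidAlgebra ℝ ℚ and AddMonoidAlgebra ℂ ℚ contain no irreducible (atomic) elements: for every f in AddMonoidAlgebra ℝ ℚ, f is not irreducible, and for every g in AddMonoidAlgebra ℂ ℚ, g is not irreducible. -/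
/-!
Up to the unit `x ^ m` with `m` the least exponent, a nonzero `f ∈ K[ℚ]` has its exponents in
`(1 / N) ℕ` and a nonzero constant term, so it is the image of a polynomial `p` with `p(0) ≠ 0`
under `X ↦ x ^ (1 / N)`. Replacing `N` by `(k + 1) N` replaces `p` by `p(X ^ (k + 1))`, a polynomial
of degree `> k`. Since `ℚ` is a linearly ordered group, the units of `K[ℚ]` are monomials, so a
factor of `p(X ^ (k + 1))` with nonzero constant term and positive degree maps to a non-unit. Hence
if every irreducible polynomial over `K` has degree `≤ k` (`k = 2` for `ℝ`, `k = 1` for `ℂ`), no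
`f` is irreducible.
-/

open Polynomial Finset

namespace AddMonoidAlgebra

section TwoUniqueSums

variable {R A : Type*} [Semiring R] [NoZeroDivisors R]

theorem one_lt_card_support_mul [Add A] [TwoUniqueSums A] {f g : AddMonoidAlgebra R A}
    (h : 1 < #f.coeff.support * #g.coeff.support) : 1 < #(f * g).coeff.support := by
  obtain ⟨⟨a₁, b₁⟩, h₁, ⟨a₂, b₂⟩, h₂, hne, hu₁, hu₂⟩ := TwoUniqueSums.uniqueAdd_of_one_lt_card h
  rw [mem_product] at h₁ h₂
  have mem_support {a b} (ha : a ∈ f.coeff.support) (hb : b ∈ g.coeff.support)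
      (hu : UniqueAdd f.coeff.support g.coeff.support a b) : a + b ∈ (f * g).coeff.support := by
    rw [Finsupp.mem_support_iff, coeff_mul_add_of_uniqueAdd hu]
    exact mul_ne_zero (Finsupp.mem_support_iff.mp ha) (Finsupp.mem_support_iff.mp hb)
  refine one_lt_card.mpr ⟨_, mem_support h₁.1 h₁.2 hu₁, _, mem_support h₂.1 h₂.2 hu₂, fun he ↦ ?_⟩
  obtain ⟨rfl, rfl⟩ := hu₁ h₂.1 h₂.2 he.symm
  exact hne rfl

theorem card_support_le_one_of_isUnit [Nontrivial R] [AddMonoid A] [TwoUniqueSums A]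
    {f : AddMonoidAlgebra R A} (hf : IsUnit f) : #f.coeff.support ≤ 1 := by
  obtain ⟨g, hfg⟩ := hf.exists_right_inv
  have hg : 0 < #g.coeff.support := by
    rw [card_pos, Finsupp.support_nonempty_iff, Ne, coeff_eq_zero]
    rintro rfl
    simp at hfg
  by_contra! h
  have := one_lt_card_support_mul (lt_of_lt_of_le h (Nat.le_mul_of_pos_right _ hg))
  rw [hfg, one_def, coeff_single, Finsupp.support_single _ one_ne_zero] at this
  simp at this

end TwoUniqueSums

theorem isUnit_single_one_s19 {R A : Type*} [Semiring R] [AddGroup A] (a : A) :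
    IsUnit (single a (1 : R)) := by
  simpa using (Group.isUnit (Multiplicative.ofAdd a)).map (of R A)

theorem exists_associated_support_nonneg {R : Type*} [CommSemiring R] {f : AddMonoidAlgebra R ℚ}
    (hf : f ≠ 0) : ∃ g : AddMonoidAlgebra R ℚ,
      Associated f g ∧ 0 ∈ g.coeff.support ∧ ∀ q ∈ g.coeff.support, 0 ≤ q := by
  have hs : f.coeff.support.Nonempty := by
    rwa [Finsupp.support_nonempty_iff, Ne, coeff_eq_zero]
  set m := f.coeff.support.min' hs
  have hcoeff (q : ℚ) : (single (-m) 1 * f).coeff q = f.coeff (m + q) := by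
    rw [coeff_single_mul_apply, neg_neg, one_mul]
  refine ⟨single (-m) 1 * f, associated_unit_mul_right _ _ (isUnit_single_one_s19 _), ?_,
    fun q hq ↦ ?_⟩
  · rw [Finsupp.mem_support_iff, hcoeff, add_zero, ← Finsupp.mem_support_iff]
    exact f.coeff.support.min'_mem hs
  · rw [Finsupp.mem_support_iff, hcoeff, ← Finsupp.mem_support_iff] at hq
    linarith [f.coeff.support.min'_le _ hq]

end AddMonoidAlgebra

theorem Finset.exists_nat_div_eq_of_nonneg (s : Finset ℚ) (hs : ∀ q ∈ s, 0 ≤ q) :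
    ∃ N : ℕ, N ≠ 0 ∧ ∀ q ∈ s, ∃ n : ℕ, (n / N : ℚ) = q := by
  have hN : ∏ q ∈ s, q.den ≠ 0 := prod_ne_zero_iff.mpr fun q _ ↦ q.den_ne_zero
  refine ⟨_, hN, fun q hq ↦ ?_⟩
  obtain ⟨t, ht⟩ := dvd_prod_of_mem Rat.den hq
  have ht0 : (t : ℚ) ≠ 0 := Nat.cast_ne_zero.mpr (right_ne_zero_of_mul (ht ▸ hN))
  refine ⟨q.num.toNat * t, ?_⟩
  rw [ht, Nat.cast_mul, Nat.cast_mul, mul_div_mul_right _ _ ht0, ← Int.cast_natCast,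
    Int.toNat_of_nonneg (Rat.num_nonneg.mpr (hs q hq)), Rat.num_div_den]

theorem natCast_div_injective {N : ℕ} (hN : N ≠ 0) :
    Function.Injective (fun n : ℕ ↦ (n / N : ℚ)) := fun _ _ h ↦
  by exact_mod_cast (div_left_inj' (Nat.cast_ne_zero.mpr hN : (N : ℚ) ≠ 0)).mp h

noncomputable def substRoot (R : Type*) [Semiring R] (N : ℕ) : R[X] →+* AddMonoidAlgebra R ℚ :=
  (AddMonoidAlgebra.mapDomainRingHom R
    ((AddMonoidHom.mulRight (N : ℚ)⁻¹).comp (Nat.castAddMonoidHom ℚ))).comp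
    (toFinsuppIso R).toRingHom

section substRoot

variable {R : Type*} [Semiring R] {N : ℕ}

theorem substRoot_monomial (N n : ℕ) (a : R) :
    substRoot R N (monomial n a) = .single (n / N : ℚ) a := by
  simp [substRoot, div_eq_mul_inv]

theorem coeff_substRoot_natCast_div (hN : N ≠ 0) (p : R[X]) (n : ℕ) :
    (substRoot R N p).coeff (n / N) = p.coeff n :=
  Finsupp.mapDomain_apply (natCast_div_injective hN) _ n

theorem card_support_substRoot (hN : N ≠ 0) (p : R[X]) :
    #(substRoot R N p).coeff.support = #p.support := by
  classical
  change #(Finsupp.mapDomain (fun n : ℕ ↦ (n / N : ℚ)) p.toFinsupp.coeff).support = _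
  rw [Finsupp.mapDomain_support_of_injective (natCast_div_injective hN),
    card_image_of_injective _ (natCast_div_injective hN)]
  rfl

theorem exists_substRoot_eq (hN : N ≠ 0) {f : AddMonoidAlgebra R ℚ}
    (hf : ∀ q ∈ f.coeff.support, ∃ n : ℕ, (n / N : ℚ) = q) : ∃ p : R[X], substRoot R N p = f :=
  ⟨⟨.ofCoeff (Finsupp.comapDomain _ f.coeff (natCast_div_injective hN).injOn)⟩,
    AddMonoidAlgebra.coeff_injective <|
      Finsupp.mapDomain_comapDomain _ (natCast_div_injective hN) _ hf⟩

end substRoot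

theorem substRoot_expand {R : Type*} [CommSemiring R] {m N : ℕ} (hm : m ≠ 0) (p : R[X]) :
    substRoot R (m * N) (expand R m p) = substRoot R N p := by
  suffices (substRoot R (m * N)).comp (expand R m).toRingHom = substRoot R N from
    congr($this p)
  have hm' : (m : ℚ) ≠ 0 := Nat.cast_ne_zero.mpr hm
  refine ringHom_ext (fun a ↦ ?_) ?_ <;>
    simp [← monomial_zero_left, ← monomial_one_one_eq_X, substRoot_monomial,
      div_mul_cancel_left₀ hm']

theorem exists_associated_substRoot {R : Type*} [CommSemiring R] {f : AddMonoidAlgebra R ℚ}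
    (hf : f ≠ 0) :
    ∃ N : ℕ, N ≠ 0 ∧ ∃ p : R[X], p.coeff 0 ≠ 0 ∧ Associated f (substRoot R N p) := by
  obtain ⟨g, hfg, hg0, hg⟩ := AddMonoidAlgebra.exists_associated_support_nonneg hf
  obtain ⟨N, hN, hdiv⟩ := g.coeff.support.exists_nat_div_eq_of_nonneg hg
  obtain ⟨p, rfl⟩ := exists_substRoot_eq hN hdiv
  refine ⟨N, hN, p, ?_, hfg⟩
  have hcoeff0 := coeff_substRoot_natCast_div hN p 0
  rw [Nat.cast_zero, zero_div] at hcoeff0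
  rwa [Finsupp.mem_support_iff, hcoeff0] at hg0

section Field

variable {K : Type*} [Field K] {N : ℕ}

theorem not_isUnit_substRoot (hN : N ≠ 0) {p : K[X]} (h0 : p.coeff 0 ≠ 0) (hp : ¬IsUnit p) :
    ¬IsUnit (substRoot K N p) := by
  intro hu
  have := AddMonoidAlgebra.card_support_le_one_of_isUnit hu
  rw [card_support_substRoot hN, card_support_le_one_iff_monomial] at this
  obtain ⟨n, a, rfl⟩ := this
  obtain ⟨rfl, ha⟩ : n = 0 ∧ a ≠ 0 := by simpa [coeff_monomial] using h0
  exact hp (by simpa using isUnit_C.mpr ha.isUnit)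

theorem Irreducible.of_substRoot (hN : N ≠ 0) {p : K[X]} (h0 : p.coeff 0 ≠ 0)
    (hp : Irreducible (substRoot K N p)) : Irreducible p := by
  refine ⟨fun hu ↦ hp.not_isUnit (hu.map _), fun a b hab ↦ ?_⟩
  rw [hab, mul_coeff_zero] at h0
  rw [hab, map_mul] at hp
  refine (hp.isUnit_or_isUnit rfl).imp (fun ha ↦ ?_) (fun hb ↦ ?_) <;> by_contra h
  · exact not_isUnit_substRoot hN (left_ne_zero_of_mul h0) h ha
  · exact not_isUnit_substRoot hN (right_ne_zero_of_mul h0) h hb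

theorem AddMonoidAlgebra.not_irreducible_of_forall_natDegree_le (k : ℕ)
    (hK : ∀ p : K[X], Irreducible p → p.natDegree ≤ k) (f : AddMonoidAlgebra K ℚ) :
    ¬Irreducible f := by
  intro hf
  obtain ⟨N, hN, p, hp0, hfp⟩ := exists_associated_substRoot hf.ne_zero
  have hp : Irreducible (substRoot K N p) := hfp.irreducible hf
  have hexpand : Irreducible (expand K (k + 1) p) := by
    refine .of_substRoot (mul_ne_zero k.succ_ne_zero hN) ?_ ?_
    · simpa [coeff_expand] using hp0
    · rwa [substRoot_expand k.succ_ne_zero]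
  have hdeg := hK _ hexpand
  rw [natDegree_expand] at hdeg
  nlinarith [(hp.of_substRoot hN hp0).natDegree_pos]

end Field

/-- The group algebras `AddMonoidAlgebra ℝ ℚ` and
`AddMonoidAlgebra ℂ ℚ` contain no irreducible (atomic) elements. -/
theorem stmt_19 :
    (∀ f : AddMonoidAlgebra ℝ ℚ, ¬ Irreducible f) ∧
    (∀ g : AddMonoidAlgebra ℂ ℚ, ¬ Irreducible g) :=
  ⟨AddMonoidAlgebra.not_irreducible_of_forall_natDegree_le 2 fun _ ↦ Irreducible.natDegree_le_two,
    AddMonoidAlgebra.not_irreducible_of_forall_natDegree_le 1 fun _ hp ↦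
      (natDegree_eq_of_degree_eq_some (IsAlgClosed.degree_eq_one_of_irreducible ℂ hp)).le⟩
end
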